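/- arXiv:2507.20791 — 11 statements merged into one kernel-verified Lean document; each statement's English description precedes it below -/
import Mathlib

section
/- Let G be a profinite group such that every closed subgroup of G has a closed permutable complement, and let S be a closed subgroup with G = HS for some closed subgroup H. Then S contains a closed permutable complement of H in G. -/
/-!
Take a closed permutable complement `L` of the closed subgroup `H ∩ S`. Dedekind's modular law
gives `S = (H ∩ S)(L ∩ S)`, hence `G = HS = H(S ∩ L)`, while `H ∩ (S ∩ L) = (H ∩ S) ∩ L = 1`.
-/

open Pointwise

theorem Subgroup.coe_mul_inf_eq_univ {G : Type*} [Group G] {H S L : Subgroup G}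
    (hHS : (H : Set G) * (S : Set G) = Set.univ)
    (hL : ((H ⊓ S : Subgroup G) : Set G) * (L : Set G) = Set.univ) :
    (H : Set G) * ((S ⊓ L : Subgroup G) : Set G) = Set.univ := by
  have hS : ((H ⊓ S : Subgroup G) : Set G) * ((L ⊓ S : Subgroup G) : Set G) = S := by
    rw [Subgroup.mul_inf_assoc _ _ _ inf_le_right, hL, Set.univ_inter]
  rw [← Set.univ_subset_iff, ← hHS, ← hS, ← mul_assoc, inf_comm L]
  gcongr
  calc (H : Set G) * ((H ⊓ S : Subgroup G) : Set G) ⊆ H * H := by gcongr; exact inf_le_left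
    _ = H := coe_mul_coe H

theorem stmt3_general {G : Type*} [Group G] [TopologicalSpace G]
    (hC : ∀ H : Subgroup G, IsClosed (H : Set G) → ∃ K : Subgroup G,
      IsClosed (K : Set G) ∧ (H : Set G) * (K : Set G) = Set.univ ∧ H ⊓ K = ⊥)
    (H S : Subgroup G) (hHc : IsClosed (H : Set G)) (hSc : IsClosed (S : Set G))
    (hsup : (H : Set G) * (S : Set G) = Set.univ) :
    ∃ K : Subgroup G, K ≤ S ∧ IsClosed (K : Set G) ∧
      (H : Set G) * (K : Set G) = Set.univ ∧ H ⊓ K = ⊥ := by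
  obtain ⟨L, hLc, hLsup, hLinf⟩ := hC (H ⊓ S) (hHc.inter hSc)
  refine ⟨S ⊓ L, inf_le_left, hSc.inter hLc, Subgroup.coe_mul_inf_eq_univ hsup hLsup, ?_⟩
  rwa [← inf_assoc]

/-- In a profinite group in which every closed subgroup has a closed permutable
complement, every closed supplement `S` of a closed subgroup `H` contains a closed
permutable complement of `H`. -/
theorem stmt3 {G : Type*} [Group G] [TopologicalSpace G] [IsTopologicalGroup G]
    [CompactSpace G] [T2Space G] [TotallyDisconnectedSpace G]
    (hC : ∀ H : Subgroup G, IsClosed (H : Set G) → ∃ K : Subgroup G,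
      IsClosed (K : Set G) ∧ (H : Set G) * (K : Set G) = Set.univ ∧ H ⊓ K = ⊥)
    (H S : Subgroup G) (hHc : IsClosed (H : Set G)) (hSc : IsClosed (S : Set G))
    (hsup : (H : Set G) * (S : Set G) = Set.univ) :
    ∃ K : Subgroup G, K ≤ S ∧ IsClosed (K : Set G) ∧
      (H : Set G) * (K : Set G) = Set.univ ∧ H ⊓ K = ⊥ :=
  stmt3_general hC H S hHc hSc hsup
end

section
/- If G₁ and G₂ are profinite groups in which every closed subgroup has a closed permutable complement, then the same holds in the direct product G₁ × G₂. -/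
/-!
Let `A ≤ G₁` be the projection of `H` and `B ≤ G₂` its slice `{y | (1, y) ∈ H}`. Both are closed,
`A` because projecting away the compact factor `G₂` is a closed map. If `K₁`, `K₂` are closed
permutable complements of `A`, `B`, then `K₁ × K₂` is one of `H`: write `g₁ = a k₁` with
`(a, x) ∈ H`, then `x⁻¹ g₂ = b k₂` with `(1, b) ∈ H`, so `(g₁, g₂) = (a, x b) (k₁, k₂)`; and an
element of `H ∩ (K₁ × K₂)` has first coordinate in `A ∩ K₁ = 1`, hence second one in `B ∩ K₂ = 1`.
-/

open Pointwise

namespace Subgroup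

variable {G₁ G₂ : Type*} [Group G₁] [Group G₂] {H : Subgroup (G₁ × G₂)}
  {K₁ : Subgroup G₁} {K₂ : Subgroup G₂}

theorem coe_mul_coe_prod_eq_univ
    (h₁ : (H.map (MonoidHom.fst G₁ G₂) : Set G₁) * (K₁ : Set G₁) = Set.univ)
    (h₂ : (H.comap (MonoidHom.inr G₁ G₂) : Set G₂) * (K₂ : Set G₂) = Set.univ) :
    (H : Set (G₁ × G₂)) * (K₁.prod K₂ : Set (G₁ × G₂)) = Set.univ := by
  refine Set.eq_univ_of_forall fun ⟨g₁, g₂⟩ => ?_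
  obtain ⟨a, ⟨⟨a, x⟩, hax, rfl⟩, k₁, hk₁, rfl⟩ := h₁.symm ▸ Set.mem_univ g₁
  obtain ⟨b, hb, k₂, hk₂, hbk⟩ := h₂.symm ▸ Set.mem_univ (x⁻¹ * g₂)
  replace hb : ((1 : G₁), b) ∈ H := hb
  refine ⟨(a, x * b), by simpa using H.mul_mem hax hb, (k₁, k₂), ⟨hk₁, hk₂⟩, ?_⟩
  simp only [MonoidHom.coe_fst, Prod.mk_mul_mk, Prod.mk.injEq, true_and]
  rw [mul_assoc, show b * k₂ = x⁻¹ * g₂ from hbk, mul_inv_cancel_left]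

theorem inf_prod_eq_bot
    (h₁ : H.map (MonoidHom.fst G₁ G₂) ⊓ K₁ = ⊥)
    (h₂ : H.comap (MonoidHom.inr G₁ G₂) ⊓ K₂ = ⊥) :
    H ⊓ K₁.prod K₂ = ⊥ := by
  refine eq_bot_iff.mpr fun ⟨k₁, k₂⟩ ⟨hkH, hk₁, hk₂⟩ => ?_
  have hk₁_mem : k₁ ∈ H.map (MonoidHom.fst G₁ G₂) ⊓ K₁ := ⟨⟨(k₁, k₂), hkH, rfl⟩, hk₁⟩
  obtain rfl : k₁ = 1 := by rwa [h₁, mem_bot] at hk₁_mem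
  have hk₂_mem : k₂ ∈ H.comap (MonoidHom.inr G₁ G₂) ⊓ K₂ := ⟨hkH, hk₂⟩
  obtain rfl : k₂ = 1 := by rwa [h₂, mem_bot] at hk₂_mem
  exact one_mem _

variable [TopologicalSpace G₁] [TopologicalSpace G₂]

theorem isClosed_map_fst [CompactSpace G₂] (hH : IsClosed (H : Set (G₁ × G₂))) :
    IsClosed (H.map (MonoidHom.fst G₁ G₂) : Set G₁) :=
  isClosedMap_fst_of_compactSpace _ hH

theorem isClosed_comap_inr (hH : IsClosed (H : Set (G₁ × G₂))) :
    IsClosed (H.comap (MonoidHom.inr G₁ G₂) : Set G₂) :=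
  hH.preimage (continuous_const.prodMk continuous_id)

end Subgroup

theorem stmt4_general {G₁ G₂ : Type*} [Group G₁] [TopologicalSpace G₁]
    [Group G₂] [TopologicalSpace G₂] [CompactSpace G₂]
    (h₁ : ∀ H : Subgroup G₁, IsClosed (H : Set G₁) → ∃ K : Subgroup G₁,
      IsClosed (K : Set G₁) ∧ (H : Set G₁) * (K : Set G₁) = Set.univ ∧ H ⊓ K = ⊥)
    (h₂ : ∀ H : Subgroup G₂, IsClosed (H : Set G₂) → ∃ K : Subgroup G₂,
      IsClosed (K : Set G₂) ∧ (H : Set G₂) * (K : Set G₂) = Set.univ ∧ H ⊓ K = ⊥) :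
    ∀ H : Subgroup (G₁ × G₂), IsClosed (H : Set (G₁ × G₂)) → ∃ K : Subgroup (G₁ × G₂),
      IsClosed (K : Set (G₁ × G₂)) ∧
      (H : Set (G₁ × G₂)) * (K : Set (G₁ × G₂)) = Set.univ ∧ H ⊓ K = ⊥ := by
  intro H hH
  obtain ⟨K₁, hK₁, hmul₁, hinf₁⟩ := h₁ _ (Subgroup.isClosed_map_fst hH)
  obtain ⟨K₂, hK₂, hmul₂, hinf₂⟩ := h₂ _ (Subgroup.isClosed_comap_inr hH)
  exact ⟨K₁.prod K₂, Subgroup.coe_prod K₁ K₂ ▸ hK₁.prod hK₂,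
    Subgroup.coe_mul_coe_prod_eq_univ hmul₁ hmul₂, Subgroup.inf_prod_eq_bot hinf₁ hinf₂⟩

/-- The direct product of two profinite groups in which every closed subgroup has a
closed permutable complement again has this property. -/
theorem stmt4 {G₁ G₂ : Type*} [Group G₁] [TopologicalSpace G₁] [IsTopologicalGroup G₁]
    [CompactSpace G₁] [T2Space G₁] [TotallyDisconnectedSpace G₁]
    [Group G₂] [TopologicalSpace G₂] [IsTopologicalGroup G₂]
    [CompactSpace G₂] [T2Space G₂] [TotallyDisconnectedSpace G₂]
    (h₁ : ∀ H : Subgroup G₁, IsClosed (H : Set G₁) → ∃ K : Subgroup G₁,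
      IsClosed (K : Set G₁) ∧ (H : Set G₁) * (K : Set G₁) = Set.univ ∧ H ⊓ K = ⊥)
    (h₂ : ∀ H : Subgroup G₂, IsClosed (H : Set G₂) → ∃ K : Subgroup G₂,
      IsClosed (K : Set G₂) ∧ (H : Set G₂) * (K : Set G₂) = Set.univ ∧ H ⊓ K = ⊥) :
    ∀ H : Subgroup (G₁ × G₂), IsClosed (H : Set (G₁ × G₂)) → ∃ K : Subgroup (G₁ × G₂),
      IsClosed (K : Set (G₁ × G₂)) ∧
      (H : Set (G₁ × G₂)) * (K : Set (G₁ × G₂)) = Set.univ ∧ H ⊓ K = ⊥ :=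
  stmt4_general h₁ h₂
end

section
/- Let {G_i}_{i∈I} be a family of profinite groups such that every closed subgroup of each G_i has a closed permutable complement. Then every closed subgroup of the cartesian product ∏_{i∈I} G_i (with the product topology) has a closed permutable complement. -/
/-!
Call `K` a partial complement of `H` on a set of coordinates `J` if `K` is a closed subgroup
containing every element supported off `J`, `HK = ∏ G_i`, and every element of `H ∩ K` is trivial
on `J`. The whole group is one on `J = ∅`. By compactness, partial complements along a chain can
be intersected, so Zorn's lemma gives a maximal one. If its `J` missed a coordinate `i`, cutting
`K` down by the preimage of a closed complement in `G_i` of the projection of `H ∩ K` would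
enlarge `J`; hence `J` is everything and `K` is a genuine complement.
-/

open Pointwise Set

section CompactGroup

variable {G : Type*} [Group G] [TopologicalSpace G] [IsTopologicalGroup G] [CompactSpace G]

theorem Subgroup.mul_iInf_eq_univ_of_directed {ι : Type*} [Nonempty ι] {H : Subgroup G}
    (hH : IsClosed (H : Set G)) {K : ι → Subgroup G} (hK : ∀ p, IsClosed (K p : Set G))
    (hdir : Directed (· ≥ ·) K) (hHK : ∀ p, (H : Set G) * (K p : Set G) = univ) :
    (H : Set G) * ((⨅ p, K p : Subgroup G) : Set G) = univ := by
  refine eq_univ_of_forall fun g => ?_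
  -- `g ∈ H * K p` exactly when the closed set `H ∩ g (K p)` is nonempty
  let t : ι → Set G := fun p => (H : Set G) ∩ (fun x => x⁻¹ * g) ⁻¹' K p
  have ht_closed : ∀ p, IsClosed (t p) := fun p => hH.inter ((hK p).preimage (by fun_prop))
  have ht_nonempty : ∀ p, (t p).Nonempty := fun p => by
    obtain ⟨h, hh, k, hk, rfl⟩ := Set.mem_mul.mp (hHK p ▸ mem_univ g)
    exact ⟨h, hh, by simpa using hk⟩
  have ht_dir : Directed (· ⊇ ·) t := fun p q => by
    obtain ⟨r, hpr, hqr⟩ := hdir p q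
    exact ⟨r, inter_subset_inter_right _ (preimage_mono hpr),
      inter_subset_inter_right _ (preimage_mono hqr)⟩
  obtain ⟨x, hx⟩ := IsCompact.nonempty_iInter_of_directed_nonempty_isCompact_isClosed t ht_dir
    ht_nonempty (fun p => (ht_closed p).isCompact) ht_closed
  rw [mem_iInter] at hx
  exact Set.mem_mul.mpr ⟨x, (hx (Classical.arbitrary ι)).1, x⁻¹ * g,
    Subgroup.mem_iInf.mpr fun p => (hx p).2, mul_inv_cancel_left x g⟩

end CompactGroup

namespace Pi

variable {I : Type*} {G : I → Type*} [∀ i, Group (G i)] [∀ i, TopologicalSpace (G i)]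

def IsPartialComplement (H : Subgroup (∀ i, G i)) (J : Set I) (K : Subgroup (∀ i, G i)) :
    Prop :=
  IsClosed (K : Set (∀ i, G i)) ∧ Subgroup.pi J (fun _ => ⊥) ≤ K ∧
    (H : Set (∀ i, G i)) * (K : Set (∀ i, G i)) = univ ∧ H ⊓ K ≤ Subgroup.pi J (fun _ => ⊥)

variable {H : Subgroup (∀ i, G i)}

theorem isPartialComplement_empty_top : IsPartialComplement H ∅ ⊤ := by
  refine ⟨isClosed_univ, le_top, eq_univ_of_forall fun g => ?_, by simp [Subgroup.pi_empty]⟩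
  exact Set.mem_mul.mpr ⟨1, H.one_mem, g, Subgroup.mem_top g, one_mul g⟩

theorem IsPartialComplement.inf_eq_bot {K : Subgroup (∀ i, G i)}
    (hK : IsPartialComplement H univ K) : H ⊓ K = ⊥ :=
  le_bot_iff.mp (Subgroup.pi_bot (f := G) ▸ hK.2.2.2)

theorem IsPartialComplement.iUnion_iInf [∀ i, IsTopologicalGroup (G i)]
    [∀ i, CompactSpace (G i)] (hH : IsClosed (H : Set (∀ i, G i))) {ι : Type*} [Nonempty ι]
    {J : ι → Set I} {K : ι → Subgroup (∀ i, G i)} (hdir : Directed (· ≥ ·) K)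
    (hJK : ∀ p, IsPartialComplement H (J p) (K p)) :
    IsPartialComplement H (⋃ p, J p) (⨅ p, K p) := by
  refine ⟨?_, ?_, ?_, ?_⟩
  · rw [Subgroup.coe_iInf]
    exact isClosed_iInter fun p => (hJK p).1
  · refine le_iInf fun p => le_trans ?_ (hJK p).2.1
    exact fun x hx i hi => hx i (mem_iUnion_of_mem p hi)
  · exact Subgroup.mul_iInf_eq_univ_of_directed hH (fun p => (hJK p).1) hdir
      fun p => (hJK p).2.2.1
  · intro x hx i hi
    obtain ⟨p, hip⟩ := mem_iUnion.mp hi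
    exact (hJK p).2.2.2 ⟨hx.1, Subgroup.mem_iInf.mp hx.2 p⟩ i hip

theorem IsPartialComplement.insert {J : Set I} {K : Subgroup (∀ i, G i)}
    (hJK : IsPartialComplement H J K) {i₀ : I} {M : Subgroup (G i₀)}
    (hM : IsClosed (M : Set (G i₀)))
    (hmul : ((H ⊓ K).map (Pi.evalMonoidHom G i₀) : Set (G i₀)) * (M : Set (G i₀)) = univ)
    (hinf : (H ⊓ K).map (Pi.evalMonoidHom G i₀) ⊓ M = ⊥) :
    IsPartialComplement H (insert i₀ J) (K ⊓ M.comap (Pi.evalMonoidHom G i₀)) := by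
  obtain ⟨hK, hJ_le, hHK, hinf_le⟩ := hJK
  refine ⟨hK.inter (hM.preimage (continuous_apply i₀)), ?_, ?_, ?_⟩
  · intro x hx
    refine ⟨hJ_le fun i hi => hx i (mem_insert_of_mem _ hi), ?_⟩
    simp [Subgroup.mem_bot.mp (hx i₀ (mem_insert _ _))]
  · refine eq_univ_of_forall fun g => ?_
    obtain ⟨h, hh, k, hk, rfl⟩ := Set.mem_mul.mp (hHK ▸ mem_univ g)
    obtain ⟨_, ⟨x, hxHK, rfl⟩, m, hm, hxm⟩ := Set.mem_mul.mp (hmul ▸ mem_univ (k i₀))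
    -- move the `H ∩ K`-part `x` of `k` over to `H`, leaving `x⁻¹ k` with `i₀`-coordinate `m`
    have hm_eq : (x⁻¹ * k) i₀ = m := by
      simp only [Pi.mul_apply, Pi.inv_apply, ← hxm, Pi.evalMonoidHom_apply, inv_mul_cancel_left]
    refine Set.mem_mul.mpr ⟨h * x, H.mul_mem hh hxHK.1, x⁻¹ * k,
      ⟨K.mul_mem (K.inv_mem hxHK.2) hk, ?_⟩, by group⟩
    simp [hm_eq, hm]
  · rintro x ⟨hxH, hxK, hxM⟩ i hi
    rcases mem_insert_iff.mp hi with rfl | hiJ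
    · have : x i ∈ (H ⊓ K).map (Pi.evalMonoidHom G i) ⊓ M :=
        ⟨Subgroup.mem_map.mpr ⟨x, ⟨hxH, hxK⟩, rfl⟩, hxM⟩
      rwa [hinf] at this
    · exact hinf_le ⟨hxH, hxK⟩ i hiJ

theorem exists_maximal_isPartialComplement [∀ i, IsTopologicalGroup (G i)]
    [∀ i, CompactSpace (G i)] (hH : IsClosed (H : Set (∀ i, G i))) :
    ∃ J K, IsPartialComplement H J K ∧ ∀ J' K', IsPartialComplement H J' K' → J ⊆ J' →
      K' ≤ K → J' ⊆ J := by
  let S : Set (Set I × (Subgroup (∀ i, G i))ᵒᵈ) :=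
    {p | IsPartialComplement H p.1 (OrderDual.ofDual p.2)}
  have hchain : ∀ c ⊆ S, IsChain (· ≤ ·) c → ∀ y ∈ c, ∃ ub ∈ S, ∀ z ∈ c, z ≤ ub := by
    intro c hcS hc y hy
    have : Nonempty c := ⟨⟨y, hy⟩⟩
    have hdir : Directed (· ≥ ·) fun p : c => OrderDual.ofDual p.1.2 := fun p q => by
      rcases hc.total p.2 q.2 with h | h
      exacts [⟨q, h.2, le_rfl⟩, ⟨p, le_rfl, h.2⟩]
    exact ⟨(⋃ p : c, p.1.1, OrderDual.toDual (⨅ p : c, OrderDual.ofDual p.1.2)),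
      IsPartialComplement.iUnion_iInf hH hdir fun p => hcS p.2,
      fun z hz => ⟨subset_iUnion_of_subset (⟨z, hz⟩ : c) le_rfl,
        show _ ≤ OrderDual.ofDual z.2 from iInf_le_of_le (⟨z, hz⟩ : c) le_rfl⟩⟩
  obtain ⟨⟨J, K⟩, -, hmax⟩ := zorn_le_nonempty₀ S hchain (∅, OrderDual.toDual ⊤)
    isPartialComplement_empty_top
  exact ⟨J, K, hmax.prop, fun J' K' hJK' hJ hK =>
    (hmax.le_of_ge (y := (J', OrderDual.toDual K')) hJK' ⟨hJ, hK⟩).1⟩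

end Pi

theorem stmt5_general {I : Type*} (G : I → Type*) [∀ i, Group (G i)] [∀ i, TopologicalSpace (G i)]
    [∀ i, IsTopologicalGroup (G i)] [∀ i, CompactSpace (G i)] [∀ i, T2Space (G i)]
    (hC : ∀ i, ∀ H : Subgroup (G i), IsClosed (H : Set (G i)) → ∃ K : Subgroup (G i),
      IsClosed (K : Set (G i)) ∧ (H : Set (G i)) * (K : Set (G i)) = Set.univ ∧ H ⊓ K = ⊥) :
    ∀ H : Subgroup (∀ i, G i), IsClosed (H : Set (∀ i, G i)) → ∃ K : Subgroup (∀ i, G i),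
      IsClosed (K : Set (∀ i, G i)) ∧
      (H : Set (∀ i, G i)) * (K : Set (∀ i, G i)) = Set.univ ∧ H ⊓ K = ⊥ := by
  intro H hH
  obtain ⟨J, K, hJK, hmax⟩ := Pi.exists_maximal_isPartialComplement hH
  have hJ : J = univ := by
    refine eq_univ_of_forall fun i => by_contra fun hi => ?_
    have hproj : IsClosed (((H ⊓ K).map (Pi.evalMonoidHom G i) : Subgroup (G i)) : Set (G i)) :=
      ((hH.inter hJK.1).isCompact.image (continuous_apply i)).isClosed
    obtain ⟨M, hM, hmul, hinf⟩ := hC i _ hproj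
    exact hi (hmax _ _ (hJK.insert hM hmul hinf) (subset_insert i J) inf_le_left (mem_insert i J))
  exact ⟨K, hJK.1, hJK.2.2.1, (hJ ▸ hJK).inf_eq_bot⟩

/-- The cartesian product of a family of profinite groups, in each of which every closed
subgroup has a closed permutable complement, again has this property. -/
theorem stmt5 {I : Type*} (G : I → Type*) [∀ i, Group (G i)] [∀ i, TopologicalSpace (G i)]
    [∀ i, IsTopologicalGroup (G i)] [∀ i, CompactSpace (G i)] [∀ i, T2Space (G i)]
    [∀ i, TotallyDisconnectedSpace (G i)]
    (hC : ∀ i, ∀ H : Subgroup (G i), IsClosed (H : Set (G i)) → ∃ K : Subgroup (G i),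
      IsClosed (K : Set (G i)) ∧ (H : Set (G i)) * (K : Set (G i)) = Set.univ ∧ H ⊓ K = ⊥) :
    ∀ H : Subgroup (∀ i, G i), IsClosed (H : Set (∀ i, G i)) → ∃ K : Subgroup (∀ i, G i),
      IsClosed (K : Set (∀ i, G i)) ∧
      (H : Set (∀ i, G i)) * (K : Set (∀ i, G i)) = Set.univ ∧ H ⊓ K = ⊥ :=
  stmt5_general G hC
end

section
/- Let G be a profinite group. If G is an inverse limit of finite C-groups (finite groups in which every subgroup has a permutable complement), then every closed subgroup of G has a closed permutable complement. -/
/-!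
By Zorn's lemma, with compactness keeping `H K = G` along descending chains, there is a minimal
closed subgroup `K` with `H K = G`. If `1 ≠ x ∈ H ∩ K`, some coordinate map `φ : G → F i` has
`φ x ≠ 1`; a complement `D` of `φ (H ∩ K)` in the C-group `F i` makes `K ∩ φ⁻¹ D` a smaller closed
subgroup with `H (K ∩ φ⁻¹ D) = G` that misses `x`, contradicting minimality.
-/

open Pointwise

def IsCGroup (Q : Type*) [Group Q] : Prop :=
  ∀ H : Subgroup Q, ∃ K : Subgroup Q, (H : Set Q) * (K : Set Q) = Set.univ ∧ H ⊓ K = ⊥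

theorem IsCGroup.exists_mul_inf_comap_eq_univ {G Q : Type*} [Group G] [Group Q]
    (hQ : IsCGroup Q) (φ : G →* Q) {H K : Subgroup G}
    (hHK : (H : Set G) * (K : Set G) = Set.univ) {x : G} (hx : x ∈ H ⊓ K) (hφx : φ x ≠ 1) :
    ∃ D : Subgroup Q,
      (H : Set G) * ((K ⊓ D.comap φ : Subgroup G) : Set G) = Set.univ ∧ φ x ∉ D := by
  obtain ⟨D, hmul, hinf⟩ := hQ ((H ⊓ K).map φ)
  refine ⟨D, Set.eq_univ_of_forall fun g => ?_, fun hxD => hφx ?_⟩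
  · obtain ⟨h, hh, k, hk, rfl⟩ : g ∈ (H : Set G) * (K : Set G) := hHK ▸ Set.mem_univ g
    obtain ⟨_, ⟨a, ha, rfl⟩, d, hd, had⟩ :
        φ k ∈ (((H ⊓ K).map φ : Subgroup Q) : Set Q) * (D : Set Q) := hmul ▸ Set.mem_univ _
    have hak : φ (a⁻¹ * k) ∈ D := by rwa [map_mul, map_inv, ← had, inv_mul_cancel_left]
    exact ⟨h * a, H.mul_mem hh ha.1, a⁻¹ * k, ⟨K.mul_mem (K.inv_mem ha.2) hk, hak⟩,
      by group⟩
  · exact (Subgroup.eq_bot_iff_forall _).mp hinf _ ⟨⟨x, hx, rfl⟩, hxD⟩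

theorem mul_sInf_eq_univ_of_isChain {G : Type*} [Group G] [TopologicalSpace G]
    [ContinuousMul G] [CompactSpace G] {H : Subgroup G} (hH : IsClosed (H : Set G))
    {c : Set (Subgroup G)} (hc : IsChain (· ≤ ·) c) (hcl : ∀ K ∈ c, IsClosed (K : Set G))
    (hmul : ∀ K ∈ c, (H : Set G) * (K : Set G) = Set.univ) :
    (H : Set G) * ((sInf c : Subgroup G) : Set G) = Set.univ := by
  refine Set.eq_univ_of_forall fun g => ?_
  rcases c.eq_empty_or_nonempty with rfl | ⟨K₀, hK₀⟩
  · exact ⟨1, H.one_mem, g, by simp, one_mul g⟩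
  have : Nonempty c := ⟨⟨K₀, hK₀⟩⟩
  -- `k ∈ K` with `k g⁻¹ ∈ H` is exactly a factorisation `g = (g k⁻¹) k` through `H K`
  let t : c → Set G := fun K => (K : Set G) ∩ (· * g⁻¹) ⁻¹' (H : Set G)
  have ht_closed (K : c) : IsClosed (t K) :=
    (hcl K K.2).inter (hH.preimage (continuous_mul_const _))
  have ht_nonempty (K : c) : (t K).Nonempty := by
    obtain ⟨h, hh, k, hk, rfl⟩ : g ∈ (H : Set G) * (K : Set G) := hmul K K.2 ▸ Set.mem_univ g
    exact ⟨k, hk, by simpa [mul_assoc] using hh⟩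
  have ht_directed : Directed (· ⊇ ·) t := by
    intro K L
    rcases hc.total K.2 L.2 with hKL | hLK
    · exact ⟨K, subset_rfl, Set.inter_subset_inter_left _ hKL⟩
    · exact ⟨L, Set.inter_subset_inter_left _ hLK, subset_rfl⟩
  obtain ⟨k, hk⟩ := IsCompact.nonempty_iInter_of_directed_nonempty_isCompact_isClosed t
    ht_directed ht_nonempty (fun K => (ht_closed K).isCompact) ht_closed
  rw [Set.mem_iInter] at hk
  refine ⟨g * k⁻¹, ?_, k, Subgroup.mem_sInf.mpr fun K hK => (hk ⟨K, hK⟩).1,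
    inv_mul_cancel_right g k⟩
  simpa using H.inv_mem (hk ⟨K₀, hK₀⟩).2

theorem exists_isClosed_complement_of_separating {G : Type*} [Group G] [TopologicalSpace G]
    [ContinuousMul G] [CompactSpace G] {ι : Type*} {Q : ι → Type*} [∀ i, Group (Q i)]
    [∀ i, TopologicalSpace (Q i)] [∀ i, DiscreteTopology (Q i)] (hQ : ∀ i, IsCGroup (Q i))
    (φ : ∀ i, G →* Q i) (hφ : ∀ i, Continuous (φ i)) (hsep : ∀ x ≠ 1, ∃ i, φ i x ≠ 1)
    {H : Subgroup G} (hH : IsClosed (H : Set G)) :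
    ∃ K : Subgroup G, IsClosed (K : Set G) ∧ (H : Set G) * (K : Set G) = Set.univ ∧ H ⊓ K = ⊥ := by
  let S : Set (Subgroup G) := {K | IsClosed (K : Set G) ∧ (H : Set G) * (K : Set G) = Set.univ}
  have hS_chain (c : Set (Subgroup G)) (hcS : c ⊆ S) (hc : IsChain (· ≤ ·) c) : sInf c ∈ S :=
    ⟨by simpa only [Subgroup.coe_sInf] using isClosed_biInter fun K hK => (hcS hK).1,
      mul_sInf_eq_univ_of_isChain hH hc (fun K hK => (hcS hK).1) fun K hK => (hcS hK).2⟩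
  obtain ⟨K, ⟨hKcl, hHK⟩, hKmin⟩ : ∃ K, Minimal (· ∈ S) K :=
    zorn_le₀ (α := (Subgroup G)ᵒᵈ) S fun c hcS hc =>
      ⟨(sInf c : Subgroup G), hS_chain c hcS hc.symm,
        fun K hK => (sInf_le hK : (sInf c : Subgroup G) ≤ K)⟩
  refine ⟨K, hKcl, hHK, (Subgroup.eq_bot_iff_forall _).mpr fun x hx => ?_⟩
  by_contra hx1
  obtain ⟨i, hφx⟩ := hsep x hx1
  obtain ⟨D, hHK', hxD⟩ := (hQ i).exists_mul_inf_comap_eq_univ (φ i) hHK hx hφx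
  have hK'cl : IsClosed ((K ⊓ D.comap (φ i) : Subgroup G) : Set G) :=
    hKcl.inter ((isClosed_discrete (D : Set (Q i))).preimage (hφ i))
  exact hxD ((le_inf_iff.mp (hKmin ⟨hK'cl, hHK'⟩ inf_le_left)).2 hx.2)

theorem stmt6_general {ι : Type*} (F : ι → Type*) [∀ i, Group (F i)]
    [∀ i, TopologicalSpace (F i)] [∀ i, DiscreteTopology (F i)]
    (hCF : ∀ i, ∀ H : Subgroup (F i), ∃ K : Subgroup (F i),
      (H : Set (F i)) * (K : Set (F i)) = Set.univ ∧ H ⊓ K = ⊥)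
    (L : Subgroup (∀ i, F i))
    {G : Type*} [Group G] [TopologicalSpace G] [IsTopologicalGroup G]
    [CompactSpace G]
    (e : G ≃* L) (he : Continuous e) :
    ∀ H : Subgroup G, IsClosed (H : Set G) → ∃ K : Subgroup G,
      IsClosed (K : Set G) ∧ (H : Set G) * (K : Set G) = Set.univ ∧ H ⊓ K = ⊥ := by
  intro H hH
  let φ : ∀ i, G →* F i := fun i => (Pi.evalMonoidHom F i).comp (L.subtype.comp e.toMonoidHom)
  refine exists_isClosed_complement_of_separating hCF φ
    (fun i => (continuous_apply i).comp (continuous_subtype_val.comp he)) (fun x hx => ?_) hH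
  by_contra! h
  exact hx (e.map_eq_one_iff.mp (Subtype.ext (funext h)))

/-- If a profinite group `G` is (topologically isomorphic to) an inverse limit of finite
C-groups, then every closed subgroup of `G` has a closed permutable complement. -/
theorem stmt6 {ι : Type*} [Preorder ι] (F : ι → Type*) [∀ i, Group (F i)]
    [∀ i, Finite (F i)] [∀ i, TopologicalSpace (F i)] [∀ i, DiscreteTopology (F i)]
    (f : ∀ i j, i ≤ j → (F j →* F i))
    (hCF : ∀ i, ∀ H : Subgroup (F i), ∃ K : Subgroup (F i),
      (H : Set (F i)) * (K : Set (F i)) = Set.univ ∧ H ⊓ K = ⊥)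
    (L : Subgroup (∀ i, F i))
    (hL : ∀ x : ∀ i, F i, x ∈ L ↔ ∀ (i j : ι) (h : i ≤ j), f i j h (x j) = x i)
    {G : Type*} [Group G] [TopologicalSpace G] [IsTopologicalGroup G]
    [CompactSpace G] [T2Space G] [TotallyDisconnectedSpace G]
    (e : G ≃* L) (he : Continuous e) (he' : Continuous e.symm) :
    ∀ H : Subgroup G, IsClosed (H : Set G) → ∃ K : Subgroup G,
      IsClosed (K : Set G) ∧ (H : Set G) * (K : Set G) = Set.univ ∧ H ⊓ K = ⊥ :=
  stmt6_general F hCF L e he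
end

section
/- Let G be a profinite group. Then every closed subgroup of G has a closed permutable complement if and only if for every open normal subgroup N of G, the finite quotient G/N is a C-group. -/
/-!
Forward: a subgroup `H` of `G/N` pulls back to an open, hence closed, subgroup of `G`, and the
image of a complement of the pullback is a complement of `H`.

Backward: by compactness, the closed supplements of a closed subgroup `H` (closed `K` with
`HK = G`) are stable under intersections of chains, so Zorn gives a minimal one `K`.
If `1 ≠ x ∈ H ∩ K`, choose an open normal `N` with `x ∉ N` and a complement `L` of `⟨xN⟩` in
`G/N`. Since `x ∈ H ∩ K`, the intersection of `K` with the preimage of `L` is still a closed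
supplement of `H`, so by minimality `xN ∈ L ∩ ⟨xN⟩ = 1`, a contradiction.
-/

open Pointwise Set

theorem ProfiniteGrp.exists_openNormalSubgroup_notMem {G : Type*} [Group G] [TopologicalSpace G]
    [IsTopologicalGroup G] [CompactSpace G] [T2Space G] [TotallyDisconnectedSpace G] {x : G}
    (hx : x ≠ 1) : ∃ N : OpenNormalSubgroup G, x ∉ N := by
  obtain ⟨N, hN⟩ := ProfiniteGrp.exist_openNormalSubgroup_sub_open_nhds_of_one
    (isOpen_compl_singleton (x := x)) hx.symm
  exact ⟨N, fun hxN => hN hxN rfl⟩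

namespace Subgroup

variable {G Q : Type*} [Group G] [Group Q]

theorem mul_map_eq_univ {f : G →* Q} (hf : Function.Surjective f) {H : Subgroup Q}
    {K : Subgroup G} (h : (H.comap f : Set G) * (K : Set G) = univ) :
    (H : Set Q) * (K.map f : Set Q) = univ :=
  calc (H : Set Q) * (K.map f : Set Q) = f '' ((H.comap f : Set G) * (K : Set G)) := by
        rw [Set.image_mul, coe_map, coe_comap, Set.image_preimage_eq _ hf]
    _ = univ := by rw [h, Set.image_univ_of_surjective hf]

theorem inf_map_eq_bot {f : G →* Q} {H : Subgroup Q} {K : Subgroup G}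
    (h : H.comap f ⊓ K = ⊥) : H ⊓ K.map f = ⊥ := by
  rw [eq_bot_iff]
  rintro _ ⟨hkH, k, hk, rfl⟩
  have : k ∈ H.comap f ⊓ K := ⟨hkH, hk⟩
  rw [h, mem_bot] at this
  simp [this]

theorem comap_mul_eq_univ {f : G →* Q} {A : Subgroup G} {L : Subgroup Q}
    (h : (A.map f : Set Q) * (L : Set Q) = univ) : (A : Set G) * (L.comap f : Set G) = univ := by
  refine eq_univ_of_forall fun g => ?_
  obtain ⟨_, ⟨a, ha, rfl⟩, l, hl, hfg⟩ : f g ∈ (A.map f : Set Q) * (L : Set Q) :=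
    h ▸ mem_univ _
  refine ⟨a, ha, a⁻¹ * g, ?_, mul_inv_cancel_left a g⟩
  rwa [SetLike.mem_coe, mem_comap, map_mul, map_inv, ← hfg, inv_mul_cancel_left]

theorem mul_inf_eq_univ {H K A L : Subgroup G} (hAH : A ≤ H) (hAK : A ≤ K)
    (hHK : (H : Set G) * (K : Set G) = univ) (hAL : (A : Set G) * (L : Set G) = univ) :
    (H : Set G) * ((K ⊓ L : Subgroup G) : Set G) = univ := by
  refine eq_univ_of_forall fun g => ?_
  obtain ⟨h, hh, k, hk, rfl⟩ : g ∈ (H : Set G) * (K : Set G) := hHK ▸ mem_univ g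
  obtain ⟨a, ha, l, hl, rfl⟩ : k ∈ (A : Set G) * (L : Set G) := hAL ▸ mem_univ k
  have hlK : l ∈ K := by simpa using K.mul_mem (K.inv_mem (hAK ha)) hk
  exact ⟨h * a, H.mul_mem hh (hAH ha), l, ⟨hlK, hl⟩, mul_assoc h a l⟩

variable [TopologicalSpace G] [IsTopologicalGroup G]

theorem isOpen_comap_mk' {N : Subgroup G} [N.Normal] (hN : IsOpen (N : Set G))
    (H : Subgroup (G ⧸ N)) : IsOpen (H.comap (QuotientGroup.mk' N) : Set G) :=
  isOpen_mono (by simpa using (QuotientGroup.mk' N).ker_le_comap H) hN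

def IsClosedSupplement (H K : Subgroup G) : Prop :=
  IsClosed (K : Set G) ∧ (H : Set G) * (K : Set G) = univ

theorem isClosedSupplement_sInf [CompactSpace G] {H : Subgroup G} (hH : IsClosed (H : Set G))
    {c : Set (Subgroup G)} (hc : IsChain (· ≤ ·) c) (hcH : ∀ K ∈ c, IsClosedSupplement H K) :
    IsClosedSupplement H (sInf c) := by
  refine ⟨by rw [coe_sInf]; exact isClosed_biInter fun K hK => (hcH K hK).1, ?_⟩
  rcases c.eq_empty_or_nonempty with rfl | ⟨K₀, hK₀⟩
  · simp [(H : Set G).mul_univ_of_one_mem H.one_mem]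
  refine eq_univ_of_forall fun g => ?_
  have : Nonempty c := ⟨⟨K₀, hK₀⟩⟩
  -- `g ∈ HK` iff some `k ∈ K` has `g k⁻¹ ∈ H`; intersect these compact sets along the chain
  let t : c → Set G := fun K => (K : Set G) ∩ (fun k => g * k⁻¹) ⁻¹' H
  have ht_closed (K : c) : IsClosed (t K) := (hcH K K.2).1.inter (hH.preimage (by fun_prop))
  have ht_nonempty (K : c) : (t K).Nonempty := by
    obtain ⟨h, hh, k, hk, rfl⟩ : g ∈ (H : Set G) * (K : Set G) := (hcH K K.2).2 ▸ mem_univ g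
    exact ⟨k, hk, by simpa using hh⟩
  have ht_directed : Directed (· ⊇ ·) t := fun K₁ K₂ => by
    rcases hc.total K₁.2 K₂.2 with h | h
    · exact ⟨K₁, subset_rfl, inter_subset_inter_left _ h⟩
    · exact ⟨K₂, inter_subset_inter_left _ h, subset_rfl⟩
  obtain ⟨k, hk⟩ := IsCompact.nonempty_iInter_of_directed_nonempty_isCompact_isClosed t
    ht_directed ht_nonempty (fun K => (ht_closed K).isCompact) ht_closed
  rw [mem_iInter] at hk
  exact ⟨g * k⁻¹, (hk ⟨K₀, hK₀⟩).2, k, mem_sInf.2 fun K hK => (hk ⟨K, hK⟩).1,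
    inv_mul_cancel_right g k⟩

theorem exists_minimal_isClosedSupplement [CompactSpace G] {H : Subgroup G}
    (hH : IsClosed (H : Set G)) : ∃ K, Minimal (IsClosedSupplement H) K := by
  obtain ⟨K, hK⟩ := zorn_le₀ (α := (Subgroup G)ᵒᵈ) {K | IsClosedSupplement H K.ofDual}
    fun c hcS hc => ⟨OrderDual.toDual (sInf (OrderDual.toDual ⁻¹' c)),
      isClosedSupplement_sInf hH hc.symm fun _ hK => hcS hK,
      fun K hK => sInf_le (show K.ofDual ∈ OrderDual.toDual ⁻¹' c from hK)⟩
  exact ⟨K.ofDual, maximal_toDual.1 hK⟩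

theorem inf_eq_bot_of_minimal [CompactSpace G] [T2Space G] [TotallyDisconnectedSpace G]
    (hC : ∀ (N : Subgroup G) [N.Normal], IsOpen (N : Set G) → ∀ y : G ⧸ N,
      ∃ L : Subgroup (G ⧸ N), (zpowers y : Set (G ⧸ N)) * (L : Set (G ⧸ N)) = univ ∧
        zpowers y ⊓ L = ⊥)
    {H K : Subgroup G} (hK : Minimal (IsClosedSupplement H) K) : H ⊓ K = ⊥ := by
  rw [eq_bot_iff]
  rintro x ⟨hxH, hxK⟩
  rw [mem_bot]
  by_contra hx
  obtain ⟨N, hxN⟩ := ProfiniteGrp.exists_openNormalSubgroup_notMem hx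
  let π := QuotientGroup.mk' (N : Subgroup G)
  obtain ⟨L, hL, hLbot⟩ := hC N N.isOpen (π x)
  have hsupp : IsClosedSupplement H (K ⊓ L.comap π) :=
    ⟨hK.prop.1.inter (isClosed_of_isOpen _ (isOpen_comap_mk' N.isOpen L)),
      mul_inf_eq_univ (zpowers_le.2 hxH) (zpowers_le.2 hxK) hK.prop.2
        (comap_mul_eq_univ (by rwa [MonoidHom.map_zpowers]))⟩
  have hxL : π x ∈ L := (hK.le_of_le hsupp inf_le_left hxK).2
  have : π x ∈ zpowers (π x) ⊓ L := ⟨mem_zpowers _, hxL⟩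
  rw [hLbot, mem_bot, QuotientGroup.mk'_apply, QuotientGroup.eq_one_iff] at this
  exact hxN this

end Subgroup

/-- A profinite group `G` has closed permutable complements for all closed subgroups if
and only if `G/N` is a C-group for every open normal subgroup `N` of `G`. -/
theorem stmt7 {G : Type*} [Group G] [TopologicalSpace G] [IsTopologicalGroup G]
    [CompactSpace G] [T2Space G] [TotallyDisconnectedSpace G] :
    (∀ H : Subgroup G, IsClosed (H : Set G) → ∃ K : Subgroup G,
      IsClosed (K : Set G) ∧ (H : Set G) * (K : Set G) = Set.univ ∧ H ⊓ K = ⊥) ↔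
    (∀ (N : Subgroup G) [N.Normal], IsOpen (N : Set G) →
      ∀ H : Subgroup (G ⧸ N), ∃ K : Subgroup (G ⧸ N),
        (H : Set (G ⧸ N)) * (K : Set (G ⧸ N)) = Set.univ ∧ H ⊓ K = ⊥) := by
  constructor
  · intro hC N _ hN H
    obtain ⟨K, -, hHK, hbot⟩ :=
      hC _ (Subgroup.isClosed_of_isOpen _ (Subgroup.isOpen_comap_mk' hN H))
    exact ⟨K.map _, Subgroup.mul_map_eq_univ (QuotientGroup.mk'_surjective N) hHK,
      Subgroup.inf_map_eq_bot hbot⟩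
  · intro hC H hH
    obtain ⟨K, hK⟩ := Subgroup.exists_minimal_isClosedSupplement hH
    exact ⟨K, hK.prop.1, hK.prop.2,
      Subgroup.inf_eq_bot_of_minimal (fun N _ hN y => hC N hN (Subgroup.zpowers y)) hK⟩
end

section
/- Every profinite group in which all closed subgroups have closed permutable complements is metabelian, i.e., its derived subgroup is abelian. -/
/-!
A commutator `⁅x, y⁆ ≠ 1` survives in a finite quotient `G ⧸ N` by an open normal subgroup, and
`G ⧸ N` inherits complements from the (open, hence closed) preimages of its subgroups. So it
suffices that a finite group in which every subgroup has a complement is metabelian.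

Induct on the order. In a minimal counterexample `D = G''` lies in every nontrivial normal
subgroup. The complement of an element of order the least prime divisor of `|G|` is normal of prime
index, so no nontrivial subgroup is perfect, whence `D` is abelian. For `1 ≠ w ∈ D` and a complement
`K` of `⟨w⟩`, the subgroup `K ⊓ D` is normal and misses `w`, so `D = ⟨w⟩` is cyclic and is
centralized by `G'`. Writing `G = D L` with `L` a complement of `D`, commutators of elements of `G'`
only see their `L`-parts, so `D = ⁅G', G'⁆ ≤ L ⊓ D = 1`.
-/

open Pointwise
open scoped commutatorElement

def IsComplementedGroup (G : Type*) [Group G] : Prop :=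
  ∀ H : Subgroup G, ∃ K : Subgroup G, H.IsComplement' K

theorem commutatorElement_mul_left_of_commute {G : Type*} [Group G] {a b c : G}
    (hab : Commute a b) (hac : Commute a c) : ⁅a * b, c⁆ = ⁅b, c⁆ := by
  have hconj : a * (b * c * b⁻¹) * a⁻¹ = b * c * b⁻¹ :=
    ((hab.mul_right hac).mul_right hab.inv_right).mul_inv_cancel
  calc ⁅a * b, c⁆ = a * (b * c * b⁻¹) * a⁻¹ * c⁻¹ := by rw [commutatorElement_def]; group
    _ = ⁅b, c⁆ := by rw [hconj, commutatorElement_def]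

theorem derivedSeries_le_of_derivedSeries_quotient_eq_bot {G : Type*} [Group G] (N : Subgroup G)
    [N.Normal] {n : ℕ} (h : derivedSeries (G ⧸ N) n = ⊥) : derivedSeries G n ≤ N := by
  rwa [← map_derivedSeries_eq (QuotientGroup.mk'_surjective N), Subgroup.map_eq_bot_iff,
    QuotientGroup.ker_mk'] at h

namespace Subgroup

variable {G G' : Type*} [Group G] [Group G']

theorem isComplement'_iff_mul_eq_univ_and_disjoint {H K : Subgroup G} :
    H.IsComplement' K ↔ (H : Set G) * (K : Set G) = Set.univ ∧ Disjoint H K :=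
  ⟨fun h ↦ ⟨h.mul_eq, h.disjoint⟩, fun h ↦ isComplement'_of_disjoint_and_mul_eq_univ h.2 h.1⟩

theorem mul_inf_eq_of_mul_eq_univ {H K A : Subgroup G} (hHK : (H : Set G) * (K : Set G) = Set.univ)
    (hHA : H ≤ A) : (H : Set G) * ↑(K ⊓ A) = A := by
  rw [mul_inf_assoc _ _ _ hHA, hHK, Set.univ_inter]

theorem eq_of_mul_eq_univ_of_inf_eq_bot {H K A : Subgroup G}
    (hHK : (H : Set G) * (K : Set G) = Set.univ) (hHA : H ≤ A) (hKA : K ⊓ A = ⊥) : H = A := by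
  have := mul_inf_eq_of_mul_eq_univ hHK hHA
  rw [hKA, coe_bot, Set.singleton_one, mul_one] at this
  exact SetLike.coe_injective this

theorem IsComplement'.subgroupOf {H K A : Subgroup G} (h : H.IsComplement' K) (hHA : H ≤ A) :
    (H.subgroupOf A).IsComplement' (K.subgroupOf A) := by
  refine isComplement'_iff_mul_eq_univ_and_disjoint.2 ⟨?_, ?_⟩
  · refine Set.eq_univ_of_forall fun a ↦ ?_
    have ha : (a : G) ∈ (H : Set G) * ↑(K ⊓ A) :=
      (mul_inf_eq_of_mul_eq_univ h.mul_eq hHA).symm ▸ a.2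
    obtain ⟨x, hx, y, ⟨hyK, hyA⟩, hxy⟩ := ha
    exact ⟨⟨x, hHA hx⟩, hx, ⟨y, hyA⟩, hyK, Subtype.ext hxy⟩
  · rw [disjoint_iff_inf_le]
    rintro a ⟨haH, haK⟩
    exact Subtype.ext (h.disjoint.le_bot ⟨haH, haK⟩)

theorem IsComplement'.map_of_comap {f : G →* G'} (hf : Function.Surjective f)
    {H : Subgroup G'} {K : Subgroup G} (h : (H.comap f).IsComplement' K) :
    H.IsComplement' (K.map f) := by
  refine isComplement'_iff_mul_eq_univ_and_disjoint.2 ⟨?_, ?_⟩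
  · refine Set.eq_univ_of_forall fun x ↦ ?_
    obtain ⟨g, rfl⟩ := hf x
    obtain ⟨a, ha, b, hb, rfl⟩ := h.mul_eq.symm ▸ Set.mem_univ g
    exact ⟨f a, ha, f b, ⟨b, hb, rfl⟩, (map_mul f a b).symm⟩
  · rw [disjoint_iff_inf_le]
    rintro _ ⟨hH, b, hb, rfl⟩
    rw [h.disjoint.le_bot ⟨hH, hb⟩, map_one]
    exact one_mem _

theorem normal_inf_of_mul_eq_univ {H K A : Subgroup G} [A.Normal] (hA : A ≤ centralizer A)
    (hHA : H ≤ A) (hHK : (H : Set G) * (K : Set G) = Set.univ) : (K ⊓ A).Normal := by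
  refine ⟨fun m hm g ↦ ?_⟩
  obtain ⟨h, hh, k, hk, rfl⟩ := hHK.symm ▸ Set.mem_univ g
  have hkm : k * m * k⁻¹ ∈ K ⊓ A :=
    ⟨K.mul_mem (K.mul_mem hk hm.1) (K.inv_mem hk), Normal.conj_mem ‹_› m hm.2 k⟩
  have hcomm : Commute h (k * m * k⁻¹) := mem_centralizer_iff.1 (hA hkm.2) h (hHA hh)
  have hconj : h * k * m * (h * k)⁻¹ = k * m * k⁻¹ :=
    calc h * k * m * (h * k)⁻¹ = h * (k * m * k⁻¹) * h⁻¹ := by group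
      _ = k * m * k⁻¹ := hcomm.mul_inv_cancel
  exact hconj ▸ hkm

theorem commutator_le_centralizer_of_isCyclic (A : Subgroup G) [A.Normal] [IsCyclic A] :
    _root_.commutator G ≤ centralizer A := by
  let := (IsCyclic.mulAutMulEquiv A).toMonoidHom.commGroupOfInjective
    (IsCyclic.mulAutMulEquiv A).injective
  have h := Abelianization.commutator_subset_ker A.normalizerMonoidHom
  rwa [normalizerMonoidHom_ker, normalizer_eq_top, ← map_subtype_le_map_subtype,
    map_subtype_commutator, map_subgroupOf_eq_of_le le_top] at h

theorem commutator_le_of_mul_eq_univ {A B K : Subgroup G} (hAB : A ≤ B) (hBA : B ≤ centralizer A)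
    (hAK : (A : Set G) * (K : Set G) = Set.univ) : ⁅B, B⁆ ≤ K := by
  have hcomm : ∀ a ∈ A, ∀ b ∈ B, Commute a b := fun a ha b hb ↦
    mem_centralizer_iff.1 (hBA hb) a ha
  have hdecomp : ∀ b ∈ B, ∃ a ∈ A, ∃ k ∈ K ⊓ B, a * k = b := fun b hb ↦ by
    have : b ∈ (A : Set G) * ↑(K ⊓ B) := (mul_inf_eq_of_mul_eq_univ hAK hAB).symm ▸ hb
    simpa only [Set.mem_mul, SetLike.mem_coe] using this
  rw [commutator_le]
  intro b₁ hb₁ b₂ hb₂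
  obtain ⟨a₁, ha₁, k₁, ⟨hk₁K, hk₁B⟩, rfl⟩ := hdecomp b₁ hb₁
  obtain ⟨a₂, ha₂, k₂, ⟨hk₂K, hk₂B⟩, rfl⟩ := hdecomp b₂ hb₂
  rw [commutatorElement_mul_left_of_commute (hcomm a₁ ha₁ k₁ hk₁B) (hcomm a₁ ha₁ _ hb₂),
    ← commutatorElement_inv,
    commutatorElement_mul_left_of_commute (hcomm a₂ ha₂ k₂ hk₂B) (hcomm a₂ ha₂ k₁ hk₁B),
    commutatorElement_inv]
  exact K.commutator_le_self (commutator_mem_commutator hk₁K hk₂K)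

end Subgroup

namespace IsComplementedGroup

variable {G : Type*} [Group G]

theorem of_surjective {G' : Type*} [Group G'] {f : G →* G'} (hf : Function.Surjective f)
    (h : ∀ H : Subgroup G', ∃ K : Subgroup G, (H.comap f).IsComplement' K) :
    IsComplementedGroup G' := fun H ↦
  let ⟨K, hK⟩ := h H
  ⟨K.map f, hK.map_of_comap hf⟩

theorem subgroup (hG : IsComplementedGroup G) (A : Subgroup G) : IsComplementedGroup A := by
  intro H
  obtain ⟨K, hK⟩ := hG (H.map A.subtype)
  refine ⟨K.subgroupOf A, ?_⟩
  have := hK.subgroupOf (Subgroup.map_subtype_le H)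
  rwa [← Subgroup.comap_subtype, Subgroup.comap_map_eq_self_of_injective A.subtype_injective]
    at this

section Finite

variable [Finite G]

theorem commutator_ne_top [Nontrivial G] (hG : IsComplementedGroup G) : commutator G ≠ ⊤ := by
  set p := (Nat.card G).minFac
  have hp : p.Prime := Nat.minFac_prime Finite.one_lt_card.ne'
  have := Fact.mk hp
  obtain ⟨z, hz⟩ := exists_prime_orderOf_dvd_card' p (Nat.minFac_dvd _)
  obtain ⟨K, hK⟩ := hG (Subgroup.zpowers z)
  have hKp : K.index = p := by rw [hK.index_eq_card, Nat.card_zpowers, hz]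
  have := Subgroup.normal_of_index_eq_minFac_card hKp
  have : IsCyclic (G ⧸ K) := isCyclic_of_prime_card hKp
  let := IsCyclic.commGroup (α := G ⧸ K)
  have hle : commutator G ≤ K := by
    simpa using Abelianization.commutator_subset_ker (QuotientGroup.mk' K)
  intro htop
  rw [htop, top_le_iff] at hle
  rw [hle, Subgroup.index_top] at hKp
  exact hp.one_lt.ne hKp

theorem commutator_ne_self (hG : IsComplementedGroup G) {A : Subgroup G} (hA : A ≠ ⊥) :
    ⁅A, A⁆ ≠ A := by
  have := (Subgroup.nontrivial_iff_ne_bot A).2 hA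
  intro h
  apply (hG.subgroup A).commutator_ne_top
  rw [← (Subgroup.map_injective A.subtype_injective).eq_iff, Subgroup.map_subtype_commutator, h,
    ← MonoidHom.range_eq_map, Subgroup.range_subtype]

theorem derivedSeries_two_eq_bot_of_forall_normal (hG : IsComplementedGroup G)
    (hmin : ∀ N : Subgroup G, N.Normal → N ≠ ⊥ → derivedSeries G 2 ≤ N) :
    derivedSeries G 2 = ⊥ := by
  have hDG' : derivedSeries G 2 = ⁅commutator G, commutator G⁆ := by
    rw [derivedSeries_succ, derivedSeries_one]
  set D := derivedSeries G 2
  by_contra hD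
  have hDab : D ≤ Subgroup.centralizer D := by
    rw [← Subgroup.commutator_eq_bot_iff_le_centralizer]
    by_contra h
    exact hG.commutator_ne_self hD
      (le_antisymm D.commutator_le_self (hmin _ (Subgroup.commutator_normal D D) h))
  obtain ⟨w, hwD, hw⟩ := D.bot_or_exists_ne_one.resolve_left hD
  obtain ⟨K, hK⟩ := hG (Subgroup.zpowers w)
  have hwD' : Subgroup.zpowers w ≤ D := Subgroup.zpowers_le.2 hwD
  have hKD : K ⊓ D = ⊥ := by
    by_contra h
    have hwK := (hmin _ (Subgroup.normal_inf_of_mul_eq_univ hDab hwD' hK.mul_eq) h hwD).1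
    exact hw (hK.disjoint.le_bot ⟨Subgroup.mem_zpowers w, hwK⟩)
  have hDcyc : D = Subgroup.zpowers w :=
    (Subgroup.eq_of_mul_eq_univ_of_inf_eq_bot hK.mul_eq hwD' hKD).symm
  have : IsCyclic D := hDcyc ▸ Subgroup.isCyclic_zpowers w
  obtain ⟨L, hL⟩ := hG D
  have hDL : D ≤ L := by
    rw [hDG']
    exact Subgroup.commutator_le_of_mul_eq_univ (hDG' ▸ Subgroup.commutator_le_self _)
      (Subgroup.commutator_le_centralizer_of_isCyclic D) hL.mul_eq
  exact hD (disjoint_self.1 (hL.disjoint.mono_right hDL))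

theorem derivedSeries_two_eq_bot (hG : IsComplementedGroup G) : derivedSeries G 2 = ⊥ := by
  induction hn : Nat.card G using Nat.strong_induction_on generalizing G with
  | _ n ih =>
  refine hG.derivedSeries_two_eq_bot_of_forall_normal fun N _ hN ↦
    derivedSeries_le_of_derivedSeries_quotient_eq_bot N ?_
  have hlt : N.index < n :=
    hn ▸ by simpa using Subgroup.index_strictAnti (bot_lt_iff_ne_bot.2 hN)
  exact ih _ hlt (.of_surjective (QuotientGroup.mk'_surjective N) fun H ↦ hG _) rfl

end Finite

end IsComplementedGroup

theorem stmt9_general {G : Type*} [Group G] [TopologicalSpace G] [IsTopologicalGroup G]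
    [CompactSpace G] [TotallyDisconnectedSpace G]
    (hC : ∀ H : Subgroup G, IsClosed (H : Set G) → ∃ K : Subgroup G,
      IsClosed (K : Set G) ∧ (H : Set G) * (K : Set G) = Set.univ ∧ H ⊓ K = ⊥) :
    ∀ x y : G, x ∈ commutator G → y ∈ commutator G → x * y = y * x := by
  intro x y hx hy
  rw [← commutatorElement_eq_one_iff_mul_comm]
  by_contra hxy
  obtain ⟨N, hN⟩ := ProfiniteGrp.exist_openNormalSubgroup_sub_open_nhds_of_one
    isOpen_compl_singleton (Ne.symm hxy)
  have : Finite (G ⧸ N.toSubgroup) := N.toSubgroup.quotient_finite_of_isOpen N.isOpen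
  have hQ : IsComplementedGroup (G ⧸ N.toSubgroup) :=
    .of_surjective (QuotientGroup.mk'_surjective _) fun H ↦ by
      obtain ⟨K, -, hmul, hinf⟩ := hC _ (Subgroup.isClosed_of_isOpen _
        (Subgroup.isOpen_mono (QuotientGroup.le_comap_mk' _ H) N.isOpen))
      exact ⟨K, Subgroup.isComplement'_of_disjoint_and_mul_eq_univ (disjoint_iff.2 hinf) hmul⟩
  have hmem : ⁅x, y⁆ ∈ derivedSeries G 2 := by
    rw [derivedSeries_succ, derivedSeries_one]
    exact Subgroup.commutator_mem_commutator hx hy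
  exact hN (derivedSeries_le_of_derivedSeries_quotient_eq_bot _ hQ.derivedSeries_two_eq_bot hmem)
    rfl

/-- A profinite group in which every closed subgroup has a closed permutable complement
is metabelian: its derived subgroup is abelian. -/
theorem stmt9 {G : Type*} [Group G] [TopologicalSpace G] [IsTopologicalGroup G]
    [CompactSpace G] [T2Space G] [TotallyDisconnectedSpace G]
    (hC : ∀ H : Subgroup G, IsClosed (H : Set G) → ∃ K : Subgroup G,
      IsClosed (K : Set G) ∧ (H : Set G) * (K : Set G) = Set.univ ∧ H ⊓ K = ⊥) :
    ∀ x y : G, x ∈ commutator G → y ∈ commutator G → x * y = y * x :=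
  stmt9_general hC
end

section
/- Let G be a profinite group which is a semidirect product G = H ⋉ N of closed subgroups H and N (N normal, G = HN, H ∩ N = 1). Suppose every closed subgroup of H has a closed permutable complement in H, and every open subgroup of N has a G-invariant permutable complement in N. Then every open subgroup of G has a permutable complement in G. -/
open Pointwise

/-!
Let `C` be a `G`-invariant permutable complement of `E ⊓ N` in `N`, so that `N ≤ E ⊔ C = E * C`,
and let `D` be a permutable complement in `H` of the closed subgroup `H ⊓ (E ⊔ C)`.
Then `D ⊔ C` is a permutable complement of `E`: since `C` is normal,
`E * (D ⊔ C) = (E ⊔ C) * D`, which is all of `G = H * N`; and an element `d * c` of `E`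
forces `d ∈ H ⊓ (E ⊔ C) ⊓ D = 1` and then `c ∈ E ⊓ N ⊓ C = 1`.
-/

namespace Subgroup

variable {G : Type*} [Group G]

theorem mul_sup_normal_eq (E D C : Subgroup G) [C.Normal] :
    (E : Set G) * ↑(D ⊔ C) = ↑(E ⊔ C) * D := by
  rw [sup_comm, normal_mul, mul_normal, mul_assoc]

theorem inf_sup_normal_eq_bot {E D C : Subgroup G} [C.Normal] (hD : D ⊓ (E ⊔ C) = ⊥)
    (hC : E ⊓ C = ⊥) : E ⊓ (D ⊔ C) = ⊥ := by
  rw [eq_bot_iff]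
  rintro x ⟨hxE, hxDC⟩
  obtain ⟨d, hd, c, hc, rfl⟩ : x ∈ (D : Set G) * C := by rwa [← mul_normal]
  have hdEC : d ∈ E ⊔ C := by
    simpa using mul_mem (mem_sup_left hxE) (mem_sup_right (inv_mem hc) : c⁻¹ ∈ E ⊔ C)
  obtain rfl : d = 1 := mem_bot.mp (hD ▸ mem_inf.mpr ⟨hd, hdEC⟩)
  simp only [one_mul] at hxE ⊢
  exact hC ▸ mem_inf.mpr ⟨hxE, hc⟩

theorem mul_eq_univ_of_mul_inf_eq {H N M D : Subgroup G} [N.Normal]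
    (hHN : (H : Set G) * (N : Set G) = Set.univ) (hNM : N ≤ M)
    (hD : ((H ⊓ M : Subgroup G) : Set G) * (D : Set G) = H) :
    (M : Set G) * (D : Set G) = Set.univ := by
  refine Set.eq_univ_of_univ_subset ?_
  calc Set.univ = ((H ⊓ M : Subgroup G) : Set G) * (D : Set G) * (N : Set G) := by
        rw [hD, hHN]
    _ = ((H ⊓ M : Subgroup G) : Set G) * (N : Set G) * (D : Set G) := by
        rw [mul_assoc, mul_assoc, set_mul_normal_comm]
    _ ⊆ (M : Set G) * (M : Set G) * (D : Set G) := by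
        gcongr
        exact inf_le_right
    _ = (M : Set G) * (D : Set G) := by rw [coe_mul_coe]

end Subgroup

theorem stmt13_general {G : Type*} [Group G] [TopologicalSpace G] [IsTopologicalGroup G]
    (H N : Subgroup G) [N.Normal] (hHc : IsClosed (H : Set G))
    (hsd : (H : Set G) * (N : Set G) = Set.univ)
    (hH : ∀ E : Subgroup G, E ≤ H → IsClosed (E : Set G) → ∃ D : Subgroup G, D ≤ H ∧
      IsClosed (D : Set G) ∧ (E : Set G) * (D : Set G) = (H : Set G) ∧ E ⊓ D = ⊥)
    (hN : ∀ M : Subgroup G, M ≤ N → IsOpen {x : N | (x : G) ∈ M} →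
      ∃ C : Subgroup G, C ≤ N ∧ C.Normal ∧
        (M : Set G) * (C : Set G) = (N : Set G) ∧ M ⊓ C = ⊥) :
    ∀ E : Subgroup G, IsOpen (E : Set G) → ∃ D : Subgroup G,
      (E : Set G) * (D : Set G) = Set.univ ∧ E ⊓ D = ⊥ := by
  intro E hE
  obtain ⟨C, hCN, hCnormal, hEC, hECbot⟩ := hN (E ⊓ N) inf_le_right <| by
    convert hE.preimage continuous_subtype_val using 1
    ext x
    simp [Subgroup.mem_inf]
  have hNEC : N ≤ E ⊔ C := SetLike.coe_subset_coe.mp <| by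
    rw [← hEC, Subgroup.mul_normal]
    exact Set.mul_subset_mul_right inf_le_left
  have hKc : IsClosed ((H ⊓ (E ⊔ C) : Subgroup G) : Set G) :=
    hHc.inter ((E ⊔ C).isClosed_of_isOpen (Subgroup.isOpen_mono le_sup_left hE))
  obtain ⟨D, hDH, -, hKD, hKDbot⟩ := hH _ inf_le_left hKc
  refine ⟨D ⊔ C, ?_, Subgroup.inf_sup_normal_eq_bot ?_ ?_⟩
  · rw [Subgroup.mul_sup_normal_eq]
    exact Subgroup.mul_eq_univ_of_mul_inf_eq hsd hNEC hKD
  · exact eq_bot_mono (le_inf (inf_le_inf_right _ hDH) inf_le_left) hKDbot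
  · rwa [inf_assoc, inf_eq_right.mpr hCN] at hECbot

/-- If a profinite group `G = H ⋉ N` is a semidirect product of closed subgroups, `H` is
profinite-C, and every open subgroup of `N` has a `G`-invariant permutable complement in
`N`, then every open subgroup of `G` has a permutable complement in `G`. -/
theorem stmt13 {G : Type*} [Group G] [TopologicalSpace G] [IsTopologicalGroup G]
    [CompactSpace G] [T2Space G] [TotallyDisconnectedSpace G]
    (H N : Subgroup G) [N.Normal] (hHc : IsClosed (H : Set G)) (hNc : IsClosed (N : Set G))
    (hsd : (H : Set G) * (N : Set G) = Set.univ) (hHN : H ⊓ N = ⊥)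
    (hH : ∀ E : Subgroup G, E ≤ H → IsClosed (E : Set G) → ∃ D : Subgroup G, D ≤ H ∧
      IsClosed (D : Set G) ∧ (E : Set G) * (D : Set G) = (H : Set G) ∧ E ⊓ D = ⊥)
    (hN : ∀ M : Subgroup G, M ≤ N → IsOpen {x : N | (x : G) ∈ M} →
      ∃ C : Subgroup G, C ≤ N ∧ C.Normal ∧
        (M : Set G) * (C : Set G) = (N : Set G) ∧ M ⊓ C = ⊥) :
    ∀ E : Subgroup G, IsOpen (E : Set G) → ∃ D : Subgroup G,
      (E : Set G) * (D : Set G) = Set.univ ∧ E ⊓ D = ⊥ :=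
  stmt13_general H N hHc hsd hH hN
end

section
/- Let G = B ⋉ A be a profinite group where A is a closed normal subgroup topologically isomorphic to a cartesian product ∏_{i∈I} ⟨a_i⟩ of cyclic groups of prime order with each ⟨a_i⟩ normal in G, and B is a closed subgroup isomorphic to a cartesian product of cyclic groups of prime order with G = BA and B ∩ A = 1. Then every open subgroup H of A has a G-invariant permutable complement in A: there exists L ≤ A normal in G with A = HL and H ∩ L = 1. -/
open Pointwise

/-!
By Zorn's lemma there is a normal subgroup `L ≤ A` maximal with `H ∩ L = 1`. For a generator
`a` of prime order outside `H L`, the prime order forces `⟨a⟩ ∩ H L = 1`, so `L ⟨a⟩` is a larger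
such subgroup; hence `H L` contains every `a i`. As `H L` contains the open subgroup `H` of `A`,
it is open, hence closed, in `A`, so it contains the closure `A` of the subgroup generated by
the `a i`.
-/

namespace Subgroup

variable {G : Type*} [Group G]

theorem disjoint_zpowers_of_prime_orderOf {a : G} (hp : (orderOf a).Prime) {M : Subgroup G}
    (ha : a ∉ M) : Disjoint M (zpowers a) := by
  have : Fact (Nat.card (zpowers a)).Prime := ⟨Nat.card_zpowers a ▸ hp⟩
  rcases (M.subgroupOf (zpowers a)).eq_bot_or_eq_top_of_prime_card with h | h
  · exact subgroupOf_eq_bot.mp h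
  · exact absurd (subgroupOf_eq_top.mp h (mem_zpowers a)) ha

theorem inf_sup_eq_bot_of_normal {H L K : Subgroup G} [K.Normal] (hHL : H ⊓ L = ⊥)
    (hK : Disjoint (H ⊔ L) K) : H ⊓ (L ⊔ K) = ⊥ := by
  rw [eq_bot_iff]
  rintro x ⟨hxH, hxLK⟩
  obtain ⟨l, hl, k, hk, rfl⟩ := Set.mem_mul.mp (mul_normal L K ▸ hxLK)
  have hk_mem : k ∈ H ⊔ L := by
    simpa using mul_mem (mem_sup_right (inv_mem hl)) (mem_sup_left hxH : l * k ∈ H ⊔ L)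
  obtain rfl : k = 1 := disjoint_def.mp hK hk_mem hk
  rw [mul_one] at hxH ⊢
  exact hHL ▸ mem_inf.mpr ⟨hxH, hl⟩

theorem exists_maximal_normal_le_inf_eq_bot (H A : Subgroup G) :
    ∃ L : Subgroup G, Maximal (fun L : Subgroup G => L.Normal ∧ L ≤ A ∧ H ⊓ L = ⊥) L := by
  refine zorn_le₀ _ fun c hc hchain => ?_
  rcases c.eq_empty_or_nonempty with rfl | hne
  · exact ⟨⊥, ⟨inferInstance, bot_le, inf_bot_eq H⟩, by simp⟩
  refine ⟨sSup c, ⟨sSup_normal c fun K hK => (hc hK).1, sSup_le fun K hK => (hc hK).2.1, ?_⟩,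
    fun K => le_sSup⟩
  rw [eq_bot_iff]
  rintro x ⟨hxH, hxc⟩
  obtain ⟨K, hKc, hxK⟩ := (mem_sSup_of_directedOn hne hchain.directedOn).mp hxc
  exact (hc hKc).2.2 ▸ mem_inf.mpr ⟨hxH, hxK⟩

theorem mem_sup_of_maximal_normal_inf_eq_bot {H A L : Subgroup G}
    (hL : Maximal (fun L : Subgroup G => L.Normal ∧ L ≤ A ∧ H ⊓ L = ⊥) L) {a : G} (haA : a ∈ A)
    (hp : (orderOf a).Prime) [(zpowers a).Normal] : a ∈ H ⊔ L := by
  by_contra ha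
  have : L.Normal := hL.prop.1
  have hbigger : (L ⊔ zpowers a).Normal ∧ L ⊔ zpowers a ≤ A ∧ H ⊓ (L ⊔ zpowers a) = ⊥ :=
    ⟨inferInstance, sup_le hL.prop.2.1 (zpowers_le.mpr haA),
      inf_sup_eq_bot_of_normal hL.prop.2.2 (disjoint_zpowers_of_prime_orderOf hp ha)⟩
  exact ha (mem_sup_right (hL.le_of_ge hbigger le_sup_left (mem_sup_right (mem_zpowers a))))

variable [TopologicalSpace G] [IsTopologicalGroup G]

theorem isClosed_of_le_of_isOpen_subgroupOf {A H M : Subgroup G} (hA : IsClosed (A : Set G))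
    (hH : IsOpen (H.subgroupOf A : Set A)) (hHM : H ≤ M) (hMA : M ≤ A) :
    IsClosed (M : Set G) := by
  have hM : IsClosed (M.subgroupOf A : Set A) :=
    (M.subgroupOf A).isClosed_of_isOpen (isOpen_mono (subgroupOf_mono A hHM) hH)
  have := hA.isClosedEmbedding_subtypeVal.isClosedMap _ hM
  rwa [← coe_subtype, ← coe_map, subgroupOf_map_subtype, inf_of_le_left hMA] at this

end Subgroup

theorem stmt14_general {G : Type*} [Group G] [TopologicalSpace G] [IsTopologicalGroup G]
    {I : Type*} (A : Subgroup G)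
    (hAc : IsClosed (A : Set G))
    (a : I → G) (haA : ∀ i, a i ∈ A)
    (hap : ∀ i, ∃ p : ℕ, p.Prime ∧ orderOf (a i) = p)
    (han : ∀ i, (Subgroup.zpowers (a i)).Normal)
    (hAgen : (⨆ i, Subgroup.zpowers (a i)).topologicalClosure = A) :
    ∀ H : Subgroup G, H ≤ A → IsOpen {x : A | (x : G) ∈ H} →
      ∃ L : Subgroup G, L ≤ A ∧ L.Normal ∧
        (H : Set G) * (L : Set G) = (A : Set G) ∧ H ⊓ L = ⊥ := by
  intro H hHA hHopen
  obtain ⟨L, hL⟩ := H.exists_maximal_normal_le_inf_eq_bot A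
  obtain ⟨hLn, hLA, hHL⟩ := hL.prop
  have hgen : ∀ i, a i ∈ H ⊔ L := fun i => by
    obtain ⟨p, hp, hord⟩ := hap i
    have := han i
    exact Subgroup.mem_sup_of_maximal_normal_inf_eq_bot hL (haA i) (hord ▸ hp)
  have hHLA : H ⊔ L = A := by
    refine le_antisymm (sup_le hHA hLA) (hAgen ▸ Subgroup.topologicalClosure_minimal _ ?_ ?_)
    · exact iSup_le fun i => Subgroup.zpowers_le.mpr (hgen i)
    · exact Subgroup.isClosed_of_le_of_isOpen_subgroupOf hAc hHopen le_sup_left (sup_le hHA hLA)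
  refine ⟨L, hLA, hLn, ?_, hHL⟩
  rw [← Subgroup.mul_normal, hHLA]

/-- Let `G = B ⋉ A` be a profinite group, where `A` is a closed normal subgroup that is
an internal cartesian product of subgroups `⟨a i⟩` of prime order, each normal in `G`,
and `B` is a closed subgroup that is an internal cartesian product of subgroups `⟨b j⟩`
of prime order. Then every open subgroup `H` of `A` has a `G`-invariant permutable
complement in `A`. -/
theorem stmt14 {G : Type*} [Group G] [TopologicalSpace G] [IsTopologicalGroup G]
    [CompactSpace G] [T2Space G] [TotallyDisconnectedSpace G]
    {I J : Type*} (A B : Subgroup G) [A.Normal]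
    (hAc : IsClosed (A : Set G)) (hBc : IsClosed (B : Set G))
    (a : I → G) (haA : ∀ i, a i ∈ A)
    (hap : ∀ i, ∃ p : ℕ, p.Prime ∧ orderOf (a i) = p)
    (han : ∀ i, (Subgroup.zpowers (a i)).Normal)
    (hAgen : (⨆ i, Subgroup.zpowers (a i)).topologicalClosure = A)
    (hAind : (⨅ i : I, (⨆ j ∈ ({i}ᶜ : Set I), Subgroup.zpowers (a j)).topologicalClosure) = ⊥)
    (b : J → G) (hbB : ∀ j, b j ∈ B)
    (hbp : ∀ j, ∃ p : ℕ, p.Prime ∧ orderOf (b j) = p)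
    (hBgen : (⨆ j, Subgroup.zpowers (b j)).topologicalClosure = B)
    (hBind : (⨅ j : J, (⨆ k ∈ ({j}ᶜ : Set J), Subgroup.zpowers (b k)).topologicalClosure) = ⊥)
    (hsd : (B : Set G) * (A : Set G) = Set.univ) (hBA : B ⊓ A = ⊥) :
    ∀ H : Subgroup G, H ≤ A → IsOpen {x : A | (x : G) ∈ H} →
      ∃ L : Subgroup G, L ≤ A ∧ L.Normal ∧
        (H : Set G) * (L : Set G) = (A : Set G) ∧ H ⊓ L = ⊥ :=
  stmt14_general A hAc a haA hap han hAgen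
end

section
/- An abelian group of squarefree finite exponent n is a C-group: every subgroup has a permutable complement. -/
open Pointwise

/-! Such a group is a module over `ZMod n`, and `ZMod n` is reduced because `n` is squarefree,
hence a semisimple ring. So every `ZMod n`-submodule, i.e. every subgroup, has a complement `K`,
and since `K` is normal, `H ⊔ K = ⊤` already gives `H * K = G`. -/

theorem Subgroup.coe_mul_coe_eq_univ_of_sup_eq_top {G : Type*} [Group G] {H K : Subgroup G}
    [K.Normal] (h : H ⊔ K = ⊤) : (H : Set G) * (K : Set G) = Set.univ := by
  rw [← Subgroup.mul_normal, h, Subgroup.coe_top]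

theorem Subgroup.complementedLattice_of_pow_squarefree_eq_one {G : Type*} [CommGroup G] {n : ℕ}
    (hn : Squarefree n) (hexp : ∀ g : G, g ^ n = 1) : ComplementedLattice (Subgroup G) := by
  have : NeZero n := ⟨hn.ne_zero⟩
  have : Fact (Squarefree n) := ⟨hn⟩
  have : Module (ZMod n) (Additive G) := AddCommGroup.zmodModule (G := Additive G) hexp
  have : IsSemisimpleRing (ZMod n) := IsArtinianRing.isSemisimpleRing_of_isReduced (ZMod n)
  let e : Subgroup G ≃o Submodule (ZMod n) (Additive G) :=
    Subgroup.toAddSubgroup.trans (AddSubgroup.toZModSubmodule n)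
  exact e.complementedLattice_iff.2 inferInstance

/-- An abelian group of squarefree finite exponent is a C-group: every subgroup has a
permutable complement. -/
theorem stmt16 {G : Type*} [CommGroup G] (n : ℕ) (hn : Squarefree n)
    (hexp : ∀ g : G, g ^ n = 1) :
    ∀ H : Subgroup G, ∃ K : Subgroup G,
      (H : Set G) * (K : Set G) = Set.univ ∧ H ⊓ K = ⊥ := by
  intro H
  have := Subgroup.complementedLattice_of_pow_squarefree_eq_one hn hexp
  obtain ⟨K, hK⟩ := exists_isCompl H
  exact ⟨K, Subgroup.coe_mul_coe_eq_univ_of_sup_eq_top hK.sup_eq_top, hK.inf_eq_bot⟩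
end

section
/- Let p be a prime and S = Q ⋉ R, where R = ∏_{C} ⟨x_C⟩ is a cartesian product of cyclic groups of order p indexed by a set 𝒞, Q is a finite abelian group, and Q acts on each ⟨x_C⟩ via a homomorphism θ_C : Q → (ℤ/pℤ)^×, with θ_C ≠ θ_D for C ≠ D. Then the only cyclic subgroups of R that are normal in S are the trivial subgroup and the subgroups ⟨x_C⟩. -/
open Pointwise

lemma aux18 {p : ℕ} (hp : p.Prime) (z : Multiplicative (ZMod p)) (hz : z ≠ 1)
    (n : ℕ) (m : ℤ) (h : z ^ n = z ^ m) : (n : ZMod p) = (m : ZMod p) := by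
  haveI : Fact p.Prime := ⟨hp⟩
  have ha : Multiplicative.toAdd z ≠ 0 := fun h0 => hz (by
    have := congrArg Multiplicative.ofAdd h0
    simpa using this)
  have h' : (n : ZMod p) * Multiplicative.toAdd z = (m : ZMod p) * Multiplicative.toAdd z := by
    have := congrArg Multiplicative.toAdd h
    simpa [toAdd_pow, toAdd_zpow, nsmul_eq_mul, zsmul_eq_mul] using this
  exact mul_right_cancel₀ ha h'

/-- Let `R = ∏_C ⟨x_C⟩` be a cartesian product of cyclic groups of order `p`, on which a
finite abelian group `Q` acts componentwise via pairwise distinct characters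
`θ C : Q → (ℤ/pℤ)ˣ`. If `y ∈ R` generates a cyclic subgroup invariant under the `Q`-action
(i.e. normal in `S = Q ⋉ R`), then `⟨y⟩` is trivial or `y` is supported in a single
component, so that `⟨y⟩ = ⟨x_C⟩` for some `C`. -/
theorem stmt18 {p : ℕ} (hp : p.Prime) {C : Type*} [DecidableEq C] {Q : Type*} [CommGroup Q] [Finite Q]
    (θ : C → (Q →* (ZMod p)ˣ)) (hθ : Function.Injective θ)
    (y : ∀ _ : C, Multiplicative (ZMod p))
    (hnorm : ∀ q : Q, ∃ m : ℤ, (fun c => y c ^ (((θ c q : (ZMod p)ˣ) : ZMod p).val)) = y ^ m) :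
    y = 1 ∨ ∃ c₀ : C, (∀ c : C, c ≠ c₀ → y c = 1) ∧
      Subgroup.zpowers y = Subgroup.zpowers (Pi.mulSingle c₀ (y c₀)) := by
  haveI : Fact p.Prime := ⟨hp⟩
  by_cases hy : y = 1
  · exact Or.inl hy
  · right
    obtain ⟨c₀, hc₀⟩ : ∃ c₀, y c₀ ≠ 1 := by
      by_contra h
      push_neg at h
      exact hy (funext fun c => h c)
    have key : ∀ c : C, c ≠ c₀ → y c = 1 := by
      intro c hc
      by_contra hyc
      apply hc
      apply hθ
      ext q
      obtain ⟨m, hm⟩ := hnorm q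
      have h1 := congrFun hm c
      have h2 := congrFun hm c₀
      simp only [Pi.pow_apply] at h1 h2
      have e1 := aux18 hp (y c) hyc _ m h1
      have e2 := aux18 hp (y c₀) hc₀ _ m h2
      have h3 := e1.trans e2.symm
      simpa [ZMod.natCast_val, ZMod.cast_id] using h3
    refine ⟨c₀, key, ?_⟩
    have hy' : y = Pi.mulSingle c₀ (y c₀) := by
      funext c
      by_cases hc : c = c₀
      · subst hc; simp
      · rw [key c hc, Pi.mulSingle_eq_of_ne hc]
    rw [hy']
    simp
end

section
/- Let p and q be primes with p ≡ 1 (mod q), and for each n ∈ ℕ let G_n be a fixed non-abelian group of order pq with generators x_n of order p and y_n of order q, with ⟨x_n⟩ normal. Let G = ∏_{n∈ℕ} G_n and A = ∏_{n∈ℕ} ⟨x_n⟩. Then the only nontrivial cyclic subgroups of A normal in G are the ⟨x_n⟩; consequently A is not a direct (restricted) product of cyclic normal subgroups of G, and G is not a C-group. -/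
open Pointwise

section AuxStmt19
variable {Γ : Type*} [Group Γ] {p q : ℕ}

variable {Γ : Type*} [Group Γ] {p q : ℕ}

theorem aux_central' (x y : Γ) (hgen : Subgroup.zpowers x ⊔ Subgroup.zpowers y = ⊤)
    (h : Commute x y) : x ∈ Subgroup.center Γ := by
  rw [Subgroup.mem_center_iff]
  intro g
  have hg : g ∈ Subgroup.centralizer {x} := by
    have hle : Subgroup.zpowers x ⊔ Subgroup.zpowers y ≤ Subgroup.centralizer {x} := by
      rw [sup_le_iff]
      constructor <;> rw [Subgroup.zpowers_le] <;>
        simp [Subgroup.mem_centralizer_iff]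
      · exact h.eq
    rw [hgen] at hle; exact hle (Subgroup.mem_top g)
  exact (Subgroup.mem_centralizer_iff.mp hg x rfl).symm

theorem aux_abelian' (x y : Γ) (hgen : Subgroup.zpowers x ⊔ Subgroup.zpowers y = ⊤)
    (h : Commute x y) (u v : Γ) : u * v = v * u := by
  have hc : Subgroup.center Γ = ⊤ := by
    rw [eq_top_iff, ← hgen, sup_le_iff]
    constructor <;> rw [Subgroup.zpowers_le]
    · exact aux_central' x y hgen h
    · exact aux_central' y x (by rwa [sup_comm] at hgen) h.symm
  exact (Subgroup.mem_center_iff.mp (hc ▸ Subgroup.mem_top v) u)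

theorem aux_orderOf' (hp : p.Prime) (x c : Γ) (hx : orderOf x = p)
    (hc : c ∈ Subgroup.zpowers x) (hc1 : c ≠ 1) : orderOf c = p := by
  have hcp : c ^ p = 1 := by
    obtain ⟨k, rfl⟩ := hc
    rw [← hx, ← zpow_natCast, ← zpow_mul, mul_comm, zpow_mul, zpow_natCast,
      pow_orderOf_eq_one, one_zpow]
  rcases hp.eq_one_or_self_of_dvd _ (orderOf_dvd_of_pow_eq_one hcp) with h | h
  · exact absurd (orderOf_eq_one_iff.mp h) hc1
  · exact h

theorem aux_zpowers_eq' (hp : p.Prime) (x c : Γ) (hx : orderOf x = p)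
    (hc : c ∈ Subgroup.zpowers x) (hc1 : c ≠ 1) :
    Subgroup.zpowers c = Subgroup.zpowers x := by
  have hfin : IsOfFinOrder x := by
    rw [← orderOf_pos_iff, hx]; exact hp.pos
  have hle : Subgroup.zpowers c ≤ Subgroup.zpowers x := by
    rw [Subgroup.zpowers_le]; exact hc
  have : Finite (Subgroup.zpowers x) := hfin.finite_zpowers
  refine Subgroup.eq_of_le_of_card_ge hle ?_
  rw [Nat.card_zpowers, Nat.card_zpowers, aux_orderOf' hp x c hx hc hc1, hx]

/-- key: `y` does not centralize any nontrivial element of `⟨x⟩`. -/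
theorem aux_key (hp : p.Prime) (x y : Γ) (hx : orderOf x = p)
    (hgen : Subgroup.zpowers x ⊔ Subgroup.zpowers y = ⊤)
    (hnab : ∃ u v : Γ, u * v ≠ v * u)
    (c : Γ) (hc : c ∈ Subgroup.zpowers x) (hc1 : c ≠ 1) :
    y * c * y⁻¹ ≠ c := by
  intro h
  have hcy : Commute c y := by
    have : y * c = c * y := by
      have := congrArg (· * y) h
      simpa [mul_assoc] using this
    exact this.symm
  have hxy : Commute x y := by
    have hxc : x ∈ Subgroup.zpowers c :=
      (aux_zpowers_eq' hp x c hx hc hc1) ▸ Subgroup.mem_zpowers x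
    obtain ⟨k, hk⟩ := Subgroup.mem_zpowers_iff.mp hxc
    rw [← hk]; exact hcy.zpow_left k
  obtain ⟨u, v, huv⟩ := hnab
  exact huv (aux_abelian' x y hgen hxy u v)


/-- the subgroup of finitely supported functions -/
def finSupp (Γ : Type*) [Group Γ] : Subgroup (ℕ → Γ) where
  carrier := {f | {n | f n ≠ 1}.Finite}
  one_mem' := by simp
  mul_mem' := by
    intro a b ha hb
    refine Set.Finite.subset (ha.union hb) ?_
    intro n hn
    simp only [Set.mem_setOf_eq, Pi.mul_apply] at hn
    rw [Set.mem_union]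
    by_contra hc
    push_neg at hc
    simp only [Set.mem_setOf_eq, not_not] at hc
    rw [hc.1, hc.2, one_mul] at hn
    exact hn rfl
  inv_mem' := by
    intro a ha
    refine Set.Finite.subset ha ?_
    intro n hn
    simp only [Set.mem_setOf_eq, Pi.inv_apply] at hn ⊢
    simpa using hn

theorem mem_finSupp {f : ℕ → Γ} : f ∈ finSupp Γ ↔ {n | f n ≠ 1}.Finite := Iff.rfl


theorem aux_part1 (hp : p.Prime) (x y : Γ) (hx : orderOf x = p)
    (hgen : Subgroup.zpowers x ⊔ Subgroup.zpowers y = ⊤)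
    (hnab : ∃ u v : Γ, u * v ≠ v * u)
    (g : ℕ → Γ) (hg : ∀ n, g n ∈ Subgroup.zpowers x)
    (hN : (Subgroup.zpowers g).Normal) :
    Subgroup.zpowers g = ⊥ ∨
      ∃ n : ℕ, Subgroup.zpowers g = Subgroup.zpowers (Pi.mulSingle n x) := by
  by_cases hone : g = 1
  · left; simp [hone]
  right
  obtain ⟨m, hm⟩ : ∃ m, g m ≠ 1 := by
    by_contra h
    push_neg at h
    exact hone (funext h)
  refine ⟨m, ?_⟩
  -- every other coordinate is trivial
  have hother : ∀ n, n ≠ m → g n = 1 := by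
    intro n hn
    by_contra hgn
    set h : ℕ → Γ := Pi.mulSingle n y with hh
    obtain ⟨k, hk⟩ := Subgroup.mem_zpowers_iff.mp
      (hN.conj_mem g (Subgroup.mem_zpowers g) h)
    -- hk : g ^ k = h * g * h⁻¹
    have hmm : g m ^ k = g m := by
      have := congrFun hk m
      simpa [hh, Pi.mulSingle_eq_of_ne (Ne.symm hn)] using this
    have hdvd : (p : ℤ) ∣ (k - 1) := by
      rw [← aux_orderOf' hp x (g m) hx (hg m) hm, orderOf_dvd_iff_zpow_eq_one,
        zpow_sub, zpow_one, hmm, mul_inv_cancel]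
    have hnn : g n ^ k = g n := by
      have : g n ^ (k - 1) = 1 := by
        rw [← aux_orderOf' hp x (g n) hx (hg n) hgn, orderOf_dvd_iff_zpow_eq_one] at hdvd
        · exact hdvd
      calc g n ^ k = g n ^ (k - 1) * g n := by rw [zpow_sub, zpow_one]; group
        _ = g n := by rw [this, one_mul]
    have hcn : y * g n * y⁻¹ = g n := by
      have := congrFun hk n
      simp only [hh, Pi.mul_apply, Pi.inv_apply, Pi.mulSingle_eq_same] at this
      rw [← this]; exact hnn
    exact aux_key hp x y hx hgen hnab (g n) (hg n) hgn hcn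
  have hgs : g = Pi.mulSingle m (g m) := by
    funext j
    by_cases hj : j = m
    · subst hj; simp
    · rw [hother j hj, Pi.mulSingle_eq_of_ne hj]
  -- zpowers (g m) = zpowers x, transfer through mulSingle
  have h1 : Subgroup.zpowers (g m) = Subgroup.zpowers x :=
    aux_zpowers_eq' hp x (g m) hx (hg m) hm
  apply le_antisymm
  · rw [Subgroup.zpowers_le, hgs]
    obtain ⟨k, hk⟩ := Subgroup.mem_zpowers_iff.mp (h1 ▸ Subgroup.mem_zpowers (g m) : g m ∈ Subgroup.zpowers x)
    exact Subgroup.mem_zpowers_iff.mpr ⟨k, by rw [← hk, Pi.mulSingle_zpow]⟩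
  · rw [Subgroup.zpowers_le, hgs]
    obtain ⟨k, hk⟩ := Subgroup.mem_zpowers_iff.mp (h1.symm ▸ Subgroup.mem_zpowers x : x ∈ Subgroup.zpowers (g m))
    exact Subgroup.mem_zpowers_iff.mpr ⟨k, by rw [← hk, Pi.mulSingle_zpow]⟩

theorem aux_part2 (hp : p.Prime) (x y : Γ) (hx : orderOf x = p)
    (hgen : Subgroup.zpowers x ⊔ Subgroup.zpowers y = ⊤)
    (hnab : ∃ u v : Γ, u * v ≠ v * u) :
    ¬ (∃ s : Set (Subgroup (ℕ → Γ)), (∀ B ∈ s, B.Normal ∧ IsCyclic B) ∧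
        sSupIndep s ∧ sSup s = Subgroup.pi Set.univ (fun _ => Subgroup.zpowers x)) := by
  rintro ⟨s, hBs, hind, hsup⟩
  have hx1 : x ≠ 1 := by
    intro h
    rw [h, orderOf_one] at hx
    exact hp.one_lt.ne (hx.symm ▸ rfl)
  have hFle : sSup s ≤ finSupp Γ := by
    apply sSup_le
    intro B hB
    obtain ⟨hBn, hBc⟩ := hBs B hB
    obtain ⟨b, hb⟩ := hBc.exists_generator
    have hBz : B = Subgroup.zpowers (b : ℕ → Γ) := by
      apply le_antisymm
      · intro w hw
        obtain ⟨k, hk⟩ := Subgroup.mem_zpowers_iff.mp (hb ⟨w, hw⟩)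
        exact Subgroup.mem_zpowers_iff.mpr ⟨k, by
          have := congrArg (Subtype.val) hk
          simpa using this⟩
      · rw [Subgroup.zpowers_le]; exact b.2
    have hble : (b : ℕ → Γ) ∈ Subgroup.pi Set.univ (fun _ => Subgroup.zpowers x) := by
      rw [← hsup]; exact le_sSup hB b.2
    have hbx : ∀ n, (b : ℕ → Γ) n ∈ Subgroup.zpowers x := fun n =>
      (Subgroup.mem_pi _).mp hble n (Set.mem_univ n)
    rcases aux_part1 hp x y hx hgen hnab b hbx (hBz ▸ hBn) with h | ⟨n, h⟩
    · rw [hBz, h]; exact bot_le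
    · rw [hBz, h, Subgroup.zpowers_le]
      rw [mem_finSupp]
      refine Set.Finite.subset (Set.finite_singleton n) ?_
      intro j hj
      simp only [Set.mem_setOf_eq] at hj
      by_contra hjn
      exact hj (by simp [Pi.mulSingle_eq_of_ne hjn])
  rw [hsup] at hFle
  have hcx : (fun _ => x) ∈ Subgroup.pi Set.univ (fun _ : ℕ => Subgroup.zpowers x) := by
    rw [Subgroup.mem_pi]
    exact fun n _ => Subgroup.mem_zpowers x
  have := hFle hcx
  rw [mem_finSupp] at this
  have : (Set.univ : Set ℕ).Finite := by
    convert this using 1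
    ext n
    simp [hx1]
  exact Set.infinite_univ this

theorem aux_part3 (hp : p.Prime) (x y : Γ) (hx : orderOf x = p)
    (hgen : Subgroup.zpowers x ⊔ Subgroup.zpowers y = ⊤)
    (hnab : ∃ u v : Γ, u * v ≠ v * u)
    (hxn : (Subgroup.zpowers x).Normal) :
    ¬ (∀ H : Subgroup (ℕ → Γ), ∃ K : Subgroup (ℕ → Γ),
        (H : Set (ℕ → Γ)) * (K : Set (ℕ → Γ)) = Set.univ ∧ H ⊓ K = ⊥) := by
  intro hC
  classical
  set A : Subgroup (ℕ → Γ) := Subgroup.pi Set.univ (fun _ => Subgroup.zpowers x) with hA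
  set D : Subgroup (ℕ → Γ) := A ⊓ finSupp Γ with hD
  obtain ⟨K, hK1, hK2⟩ := hC D
  have hdecomp : ∀ g : ℕ → Γ, ∃ d ∈ D, ∃ k ∈ K, d * k = g := by
    intro g
    have : g ∈ (D : Set (ℕ → Γ)) * (K : Set (ℕ → Γ)) := by rw [hK1]; trivial
    exact Set.mem_mul.mp this
  have hAmem : ∀ {f : ℕ → Γ}, f ∈ A ↔ ∀ n, f n ∈ Subgroup.zpowers x := by
    intro f
    rw [hA, Subgroup.mem_pi]
    exact ⟨fun h n => h n trivial, fun h n _ => h n⟩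
  -- A is normal
  have hAnormal : ∀ g f : ℕ → Γ, f ∈ A → g * f * g⁻¹ ∈ A := by
    intro g f hf
    rw [hAmem] at hf ⊢
    intro n
    exact hxn.conj_mem _ (hf n) (g n)
  -- L := A ⊓ K is normal in G
  set L : Subgroup (ℕ → Γ) := A ⊓ K with hL
  have hLnormal : ∀ g l : ℕ → Γ, l ∈ L → g * l * g⁻¹ ∈ L := by
    intro g l hl
    obtain ⟨d, hd, k, hk, rfl⟩ := hdecomp g
    obtain ⟨hlA, hlK⟩ := Subgroup.mem_inf.mp hl
    have hl'A : k * l * k⁻¹ ∈ A := hAnormal k l hlA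
    have hl'K : k * l * k⁻¹ ∈ K := K.mul_mem (K.mul_mem hk hlK) (K.inv_mem hk)
    have hl' : k * l * k⁻¹ ∈ L := Subgroup.mem_inf.mpr ⟨hl'A, hl'K⟩
    have : d * (k * l * k⁻¹) * d⁻¹ = k * l * k⁻¹ := by
      funext j
      have hdj : d j ∈ Subgroup.zpowers x := (hAmem.mp (Subgroup.mem_inf.mp hd).1) j
      have hlj : (k * l * k⁻¹) j ∈ Subgroup.zpowers x := (hAmem.mp hl'A) j
      obtain ⟨a, ha⟩ := Subgroup.mem_zpowers_iff.mp hdj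
      obtain ⟨b, hb⟩ := Subgroup.mem_zpowers_iff.mp hlj
      simp only [Pi.mul_apply, Pi.inv_apply] at hb ⊢
      rw [← ha, ← hb]
      group
    have heq : d * k * l * (d * k)⁻¹ = d * (k * l * k⁻¹) * d⁻¹ := by group
    rw [heq, this]
    exact hl'
  -- L is trivial
  have hLbot : ∀ l ∈ L, l = (1 : ℕ → Γ) := by
    intro l hl
    by_contra hl1
    obtain ⟨m, hm⟩ : ∃ m, l m ≠ 1 := by
      by_contra h
      push_neg at h
      exact hl1 (funext h)
    set h : ℕ → Γ := Pi.mulSingle m y with hh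
    set c : ℕ → Γ := h * l * h⁻¹ * l⁻¹ with hc
    have hcL : c ∈ L := L.mul_mem (hLnormal h l hl) (L.inv_mem hl)
    have hcF : c ∈ finSupp Γ := by
      rw [mem_finSupp]
      refine Set.Finite.subset (Set.finite_singleton m) ?_
      intro j hj
      simp only [Set.mem_setOf_eq] at hj
      by_contra hjm
      apply hj
      have hhj : h j = 1 := by simp [hh, Pi.mulSingle_eq_of_ne hjm]
      simp [hc, Pi.mul_apply, Pi.inv_apply, hhj]
    have hcD : c ∈ D := Subgroup.mem_inf.mpr ⟨(Subgroup.mem_inf.mp hcL).1, hcF⟩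
    have hcbot : c ∈ D ⊓ K := Subgroup.mem_inf.mpr ⟨hcD, (Subgroup.mem_inf.mp hcL).2⟩
    rw [hK2] at hcbot
    have hcm : c m = 1 := by rw [Subgroup.mem_bot] at hcbot; rw [hcbot]; rfl
    have : y * l m * y⁻¹ * (l m)⁻¹ = 1 := by
      have : c m = y * l m * y⁻¹ * (l m)⁻¹ := by
        simp [hc, hh, Pi.mul_apply, Pi.inv_apply]
      rw [← this, hcm]
    apply aux_key hp x y hx hgen hnab (l m) (hAmem.mp (Subgroup.mem_inf.mp hl).1 m) hm
    calc y * l m * y⁻¹ = (y * l m * y⁻¹ * (l m)⁻¹) * l m := by group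
      _ = l m := by rw [this, one_mul]
  -- hence A ≤ D
  have hAD : ∀ f, f ∈ A → f ∈ D := by
    intro f hf
    obtain ⟨d, hd, k, hk, hdk⟩ := hdecomp f
    have hkA : k ∈ A := by
      have : k = d⁻¹ * f := by rw [← hdk]; group
      rw [this]
      exact A.mul_mem (A.inv_mem (Subgroup.mem_inf.mp hd).1) hf
    have : k = 1 := hLbot k (Subgroup.mem_inf.mpr ⟨hkA, hk⟩)
    rw [← hdk, this, mul_one]
    exact hd
  -- contradiction with the constant function x
  have hx1 : x ≠ 1 := by
    intro hx0
    rw [hx0, orderOf_one] at hx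
    exact hp.one_lt.ne (hx.symm ▸ rfl)
  have hcx : (fun _ => x) ∈ A := hAmem.mpr fun n => Subgroup.mem_zpowers x
  have := (Subgroup.mem_inf.mp (hAD _ hcx)).2
  rw [mem_finSupp] at this
  apply Set.infinite_univ (α := ℕ)
  convert this using 1
  ext n
  simp [hx1]

end AuxStmt19


/-- Let `p ≡ 1 (mod q)` be primes and `Γ` the non-abelian group of order `pq`, generated
by `x` of order `p` and `y` of order `q` with `⟨x⟩` normal. In `G = ∏_{n ∈ ℕ} Γ` with
`A = ∏_{n ∈ ℕ} ⟨x⟩`, the only nontrivial cyclic subgroups of `A` normal in `G` are the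
component subgroups `⟨x_n⟩`; consequently `A` is not a restricted direct product of
cyclic normal subgroups of `G`, and `G` is not a C-group. -/
theorem stmt19 {p q : ℕ} (hp : p.Prime) (hq : q.Prime) (hpq : p % q = 1)
    {Γ : Type*} [Group Γ] (hcard : Nat.card Γ = p * q)
    (hnab : ∃ u v : Γ, u * v ≠ v * u)
    (x y : Γ) (hx : orderOf x = p) (hy : orderOf y = q)
    (hgen : Subgroup.zpowers x ⊔ Subgroup.zpowers y = ⊤)
    (hxn : (Subgroup.zpowers x).Normal) :
    (∀ g : ℕ → Γ, (∀ n, g n ∈ Subgroup.zpowers x) → (Subgroup.zpowers g).Normal →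
        Subgroup.zpowers g = ⊥ ∨
          ∃ n : ℕ, Subgroup.zpowers g = Subgroup.zpowers (Pi.mulSingle n x)) ∧
    ¬ (∃ s : Set (Subgroup (ℕ → Γ)), (∀ B ∈ s, B.Normal ∧ IsCyclic B) ∧
        sSupIndep s ∧ sSup s = Subgroup.pi Set.univ (fun _ => Subgroup.zpowers x)) ∧
    ¬ (∀ H : Subgroup (ℕ → Γ), ∃ K : Subgroup (ℕ → Γ),
        (H : Set (ℕ → Γ)) * (K : Set (ℕ → Γ)) = Set.univ ∧ H ⊓ K = ⊥) := by
  exact ⟨fun g hg hN => aux_part1 hp x y hx hgen hnab g hg hN,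
    aux_part2 hp x y hx hgen hnab, aux_part3 hp x y hx hgen hnab hxn⟩
end
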